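/- arXiv:1508.01360 — 12 statements merged into one kernel-verified Lean document; each statement's English description precedes it below -/
import Mathlib

section
/- For any integers 0 < m_1 < m_2 < … < m_t, the multi-delimiter code D_{m_1,…,m_t} is prefix-free: no codeword of D_{m_1,…,m_t} is a prefix of a distinct codeword of D_{m_1,…,m_t}. In particular, the code is uniquely decodable. -/
/-- The word `1^mi 0`. -/
def shortWord (mi : ℕ) : List Bool := List.replicate mi true ++ [false]

/-- The delimiter `0 1^mi 0`. -/
def delim (mi : ℕ) : List Bool := false :: (List.replicate mi true ++ [false])

/-- The multi-delimiter code `D_{m_1,…,m_t}`: the words `1^{m_i} 0` together with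
all words that (i) do not begin with any `1^{m_i} 0`, (ii) end with the suffix
`0 1^{m_i} 0` for some `i`, and (iii) contain `0 1^{m_i} 0` only as that suffix. -/
def MultiDelim {t : ℕ} (m : Fin t → ℕ) : Set (List Bool) :=
  {w | (∃ i, w = shortWord (m i)) ∨
    ((∀ i, ¬ shortWord (m i) <+: w) ∧
     (∃ i, delim (m i) <:+ w) ∧
     (∀ i u v, w = u ++ delim (m i) ++ v → v = []))}

lemma count_false_shortWord (n : ℕ) : (shortWord n).count false = 1 := by
  simp [shortWord, List.count_append, List.count_replicate]

lemma count_false_delim (n : ℕ) : (delim n).count false = 2 := by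
  simp [delim, List.count_append, List.count_replicate, List.count_cons]

/-- for `0 < m_1 < … < m_t`, the multi-delimiter code `D_{m_1,…,m_t}`
is prefix-free: no codeword is a prefix of a distinct codeword. -/
theorem multiDelim_prefixFree {t : ℕ} (ht : 0 < t) (m : Fin t → ℕ)
    (hpos : ∀ i, 0 < m i) (hmono : StrictMono m) :
    ∀ w₁ ∈ MultiDelim m, ∀ w₂ ∈ MultiDelim m, w₁ <+: w₂ → w₁ = w₂ := by
  rintro w₁ (⟨i, rfl⟩ | ⟨hnp₁, ⟨i, u, rfl⟩, hocc₁⟩) w₂ hw₂ hpre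
  · rcases hw₂ with ⟨j, rfl⟩ | ⟨hnp₂, _, _⟩
    · -- both short words
      have hlen := hpre.length_le
      simp only [shortWord, List.length_append, List.length_replicate,
        List.length_singleton] at hlen
      have hle : m i ≤ m j := by omega
      rcases eq_or_lt_of_le hle with heq | hlt
      · rw [shortWord, shortWord, heq]
      · exfalso
        have h1 : (shortWord (m i))[m i]'(by
            simp [shortWord]) = false := by
          simp [shortWord, List.getElem_append_right, List.length_replicate]
        have h2 : (shortWord (m j))[m i]'(by
            simp [shortWord]; omega) = true := by
          simp only [shortWord]
          rw [List.getElem_append_left (by simpa using hlt),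
            List.getElem_replicate]
        have := hpre.getElem (show m i < (shortWord (m i)).length by simp [shortWord])
        rw [h1, h2] at this
        exact Bool.false_ne_true this
    · exact absurd hpre (hnp₂ i)
  · rcases hw₂ with ⟨j, rfl⟩ | ⟨hnp₂, _, hocc₂⟩
    · -- long prefix of short: impossible by counting falses
      exfalso
      have hc : ((u ++ delim (m i)).count false : ℕ) ≤
          (shortWord (m j)).count false := hpre.sublist.count_le _
      rw [List.count_append, count_false_delim, count_false_shortWord] at hc
      omega
    · obtain ⟨r, hr⟩ := hpre
      have : r = [] := hocc₂ i u r (by rw [← hr, List.append_assoc])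
      rw [← hr, this, List.append_nil]
end

section
/- (Theorem 1, first part.) For every integer m ≥ 1, the Fibonacci code Fib m is a (k,Δ)-code: every codeword w of Fib m can be written as a concatenation w = g_1 g_2 ⋯ g_r of a nonempty finite sequence of binary words, where each g_j either has the form 0^{k-1} 1 1^{Δ} 0 for some integers k ≥ 1 and 0 ≤ Δ ≤ m−2, or has the form 0^{k-1} 1^m for some integer k ≥ 1. -/
/-- The Fibonacci code of order `m`: all binary words having `1^m` as a suffix and
containing `1^m` as a substring only in that suffix position (this includes the
word `1^m` itself). -/
def FibCode (m : ℕ) : Set (List Bool) :=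
  {w | List.replicate m true <:+ w ∧
    ∀ u v, w = u ++ List.replicate m true ++ v → v = []}

/-!
Read a codeword from left to right, remembering the current run of ones. A `0` that ends a
nonempty run of `j` ones closes a group `0^z 1^j 0`, and `j < m` because the only occurrence
of `1^m` is the final suffix; a `0` met outside a run is absorbed into the next group; and the
word ends exactly when a run of `m` ones has been read, which closes the last group `0^z 1^m`.
-/

open List

/-- The groups are counted by their number `z = k - 1` of leading zeros, which avoids the
truncated subtraction `k - 1`. -/
def IsFibGroup (m : ℕ) (g : List Bool) : Prop :=
  (∃ z j, 0 < j ∧ j < m ∧ g = replicate z false ++ replicate j true ++ [false]) ∨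
    ∃ z, g = replicate z false ++ replicate m true

theorem IsFibGroup.false_cons {m : ℕ} {g : List Bool} (hg : IsFibGroup m g) :
    IsFibGroup m (false :: g) := by
  rcases hg with ⟨z, j, hj, hjm, rfl⟩ | ⟨z, rfl⟩
  · exact Or.inl ⟨z + 1, j, hj, hjm, by simp [replicate_succ]⟩
  · exact Or.inr ⟨z + 1, by simp [replicate_succ]⟩

theorem List.IsSuffix.of_append_cons_of_not_mem {α : Type*} {l l₁ l₂ : List α} {a : α}
    (h : l <:+ l₁ ++ a :: l₂) (ha : a ∉ l) : l <:+ l₂ := by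
  rcases suffix_or_suffix_of_suffix h (suffix_append l₁ (a :: l₂)) with h' | h'
  · rcases suffix_cons_iff.mp h' with rfl | h''
    · simp at ha
    · exact h''
  · exact absurd (h'.subset mem_cons_self) ha

namespace FibCode

variable {m : ℕ}

theorem of_append {p r : List Bool} (h : p ++ r ∈ FibCode m)
    (hr : replicate m true <:+ r) : r ∈ FibCode m :=
  ⟨hr, fun u v huv => h.2 (p ++ u) v (by simp [huv])⟩

theorem of_append_false_cons {p r : List Bool} (h : p ++ false :: r ∈ FibCode m) :
    r ∈ FibCode m :=
  of_append (p := p ++ [false]) (by simpa using h) (h.1.of_append_cons_of_not_mem (by simp))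

theorem eq_of_replicate_append_mem {j : ℕ} {t : List Bool}
    (h : replicate j true ++ t ∈ FibCode m) (hmj : m ≤ j) : j = m ∧ t = [] := by
  have hv := h.2 [] (replicate (j - m) true ++ t) (by
    rw [nil_append, ← append_assoc, replicate_append_replicate, Nat.add_sub_cancel' hmj])
  simp only [append_eq_nil_iff, replicate_eq_nil_iff] at hv
  exact ⟨by omega, hv.2⟩

theorem eq_of_replicate_mem {j : ℕ} (h : replicate j true ∈ FibCode m) : j = m :=
  (eq_of_replicate_append_mem (t := []) (by simpa using h)
    (by simpa using h.1.length_le)).1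

theorem lt_of_replicate_append_false_cons_mem {j : ℕ} {r : List Bool}
    (h : replicate j true ++ false :: r ∈ FibCode m) : j < m := by
  by_contra! hmj
  simpa using (eq_of_replicate_append_mem h hmj).2

theorem exists_fibGroups_of_replicate_append_mem (w : List Bool) (i : ℕ)
    (hw : replicate i true ++ w ∈ FibCode m) :
    ∃ gs : List (List Bool), gs ≠ [] ∧ replicate i true ++ w = gs.flatten ∧
      ∀ g ∈ gs, IsFibGroup m g := by
  induction w generalizing i with
  | nil =>
    rw [append_nil] at hw ⊢
    refine ⟨[replicate i true], by simp, by simp, ?_⟩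
    simp only [mem_singleton, forall_eq]
    exact Or.inr ⟨0, by simp [eq_of_replicate_mem hw]⟩
  | cons b w ih =>
    cases b with
    | true =>
      have hshift : replicate i true ++ true :: w = replicate (i + 1) true ++ w := by
        simp [replicate_succ']
      rw [hshift] at hw ⊢
      exact ih (i + 1) hw
    | false =>
      obtain ⟨gs, hne, hflat, hgs⟩ := ih 0 (by simpa using of_append_false_cons hw)
      rw [replicate_zero, nil_append] at hflat
      rcases Nat.eq_zero_or_pos i with rfl | hi
      · obtain ⟨g, gs, rfl⟩ := exists_cons_of_ne_nil hne
        refine ⟨(false :: g) :: gs, by simp, by simp [hflat], ?_⟩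
        simp only [mem_cons, forall_eq_or_imp] at hgs ⊢
        exact ⟨hgs.1.false_cons, hgs.2⟩
      · refine ⟨(replicate i true ++ [false]) :: gs, by simp, by simp [hflat], ?_⟩
        simp only [mem_cons, forall_eq_or_imp]
        exact ⟨Or.inl ⟨0, i, hi, lt_of_replicate_append_false_cons_mem hw, by simp⟩, hgs⟩

end FibCode

theorem fibCode_is_kDelta_code_general (m : ℕ) :
    ∀ w ∈ FibCode m, ∃ gs : List (List Bool), gs ≠ [] ∧ w = gs.flatten ∧
      ∀ g ∈ gs,
        (∃ k Δ : ℕ, 1 ≤ k ∧ Δ + 2 ≤ m ∧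
          g = List.replicate (k - 1) false ++ [true] ++
              List.replicate Δ true ++ [false]) ∨
        (∃ k : ℕ, 1 ≤ k ∧
          g = List.replicate (k - 1) false ++ List.replicate m true) := by
  intro w hw
  obtain ⟨gs, hne, hflat, hgs⟩ :=
    FibCode.exists_fibGroups_of_replicate_append_mem w 0 (by simpa using hw)
  refine ⟨gs, hne, by simpa using hflat, fun g hg => ?_⟩
  rcases hgs g hg with ⟨z, j, hj, hjm, rfl⟩ | ⟨z, rfl⟩
  · obtain ⟨Δ, rfl⟩ := Nat.exists_eq_add_of_lt hj
    exact Or.inl ⟨z + 1, Δ, by omega, by omega, by simp [replicate_succ]⟩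
  · exact Or.inr ⟨z + 1, by omega, by simp⟩

/-- Theorem 1, first part: for every `m ≥ 1` the Fibonacci code
`Fib m` is a `(k,Δ)`-code: every codeword is a concatenation of a nonempty list of
groups, each of the form `0^{k-1} 1 1^Δ 0` with `k ≥ 1`, `0 ≤ Δ ≤ m-2`, or of the
form `0^{k-1} 1^m` with `k ≥ 1`. -/
theorem fibCode_is_kDelta_code (m : ℕ) (hm : 1 ≤ m) :
    ∀ w ∈ FibCode m, ∃ gs : List (List Bool), gs ≠ [] ∧ w = gs.flatten ∧
      ∀ g ∈ gs,
        (∃ k Δ : ℕ, 1 ≤ k ∧ Δ + 2 ≤ m ∧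
          g = List.replicate (k - 1) false ++ [true] ++
              List.replicate Δ true ++ [false]) ∨
        (∃ k : ℕ, 1 ≤ k ∧
          g = List.replicate (k - 1) false ++ List.replicate m true) :=
  fibCode_is_kDelta_code_general m
end

section
/- (Theorem 1, second part.) For every integer m ≥ 1, the Fibonacci code Fib m is not a (Δ,k)-code. Precisely: there do not exist an integer d ≥ 1 and functions φ₁ : {0,…,d−1} → binary words and φ₂ : ℕ_{≥1} → binary words, all of whose values are nonempty, with φ₁ injective with prefix-free image and φ₂ injective with prefix-free image, such that every codeword w of Fib m can be written as a concatenation w = φ₁(Δ_1)φ₂(k_1) φ₁(Δ_2)φ₂(k_2) ⋯ φ₁(Δ_r)φ₂(k_r) for some nonempty finite sequence of pairs (Δ_1,k_1),…,(Δ_r,k_r) with Δ_j ∈ {0,…,d−1} and k_j ≥ 1. -/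
theorem replicate_append_replicate_mem_fibCode {m : ℕ} (hm : 1 ≤ m) (n : ℕ) :
    List.replicate n false ++ List.replicate m true ∈ FibCode m := by
  refine ⟨List.suffix_append _ _, fun u v h => ?_⟩
  have hn : n ≤ u.length := by
    by_contra hlt
    -- the letter at position `u.length` is `false` on the left but starts `1^m` on the right
    have := congrArg (·[u.length]?) h
    grind
  have hlen := congrArg List.length h
  simp only [List.length_append, List.length_replicate] at hlen
  exact List.eq_nil_of_length_eq_zero (by omega)

theorem forall_mem_eq_of_prefix_replicate_append {α : Type*} {x : α} {u w : List α} {n : ℕ}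
    (h : u <+: List.replicate n x ++ w) (hu : u.length ≤ n) : ∀ b ∈ u, b = x := by
  rw [List.prefix_iff_eq_take, List.take_append_of_le_length (by simpa using hu),
    List.take_replicate] at h
  rw [h]
  exact fun _ => List.eq_of_mem_replicate

def IsPrefixFree {ι α : Type*} (f : ι → List α) : Prop :=
  ∀ i j, f i <+: f j → i = j

namespace IsPrefixFree

variable {ι α : Type*} {f : ι → List α}

theorem eq_of_prefix_of_prefix (hf : IsPrefixFree f) {i j : ι} {w : List α}
    (hi : f i <+: w) (hj : f j <+: w) : i = j :=
  (List.prefix_or_prefix_of_prefix hi hj).elim (hf i j) fun h => (hf j i h).symm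

theorem eq_of_forall_mem_eq (hf : IsPrefixFree f) {i j : ι} {x : α}
    (hi : ∀ b ∈ f i, b = x) (hj : ∀ b ∈ f j, b = x) : i = j := by
  refine hf.eq_of_prefix_of_prefix (w := List.replicate ((f i).length + (f j).length) x)
    (List.prefix_replicate_iff.2 ⟨?_, List.eq_replicate_of_mem hi⟩)
    (List.prefix_replicate_iff.2 ⟨?_, List.eq_replicate_of_mem hj⟩) <;> omega

end IsPrefixFree

def pairEncoding {ι κ α : Type*} (φ₁ : ι → List α) (φ₂ : κ → List α) (ps : List (ι × κ)) :
    List α :=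
  (ps.map fun p => φ₁ p.1 ++ φ₂ p.2).flatten

section pairEncoding

variable {ι κ α : Type*} {φ₁ : ι → List α} {φ₂ : κ → List α}

@[simp]
theorem pairEncoding_nil : pairEncoding φ₁ φ₂ [] = [] := rfl

@[simp]
theorem pairEncoding_cons (p : ι × κ) (ps : List (ι × κ)) :
    pairEncoding φ₁ φ₂ (p :: ps) = φ₁ p.1 ++ φ₂ p.2 ++ pairEncoding φ₁ φ₂ ps := by
  simp [pairEncoding]

theorem pairEncoding_cons_eq_append_iff (hφ₁ : IsPrefixFree φ₁) {p : ι × κ}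
    {ps : List (ι × κ)} {i : ι} {w : List α} :
    pairEncoding φ₁ φ₂ (p :: ps) = φ₁ i ++ w ↔ p.1 = i ∧ w = φ₂ p.2 ++ pairEncoding φ₁ φ₂ ps := by
  constructor
  · intro h
    have hi : p.1 = i := hφ₁.eq_of_prefix_of_prefix (w := φ₁ i ++ w)
      (h ▸ by simp [List.append_assoc]) (List.prefix_append _ _)
    subst hi
    refine ⟨rfl, (List.append_cancel_left (as := φ₁ p.1) ?_).symm⟩
    simpa [List.append_assoc] using h
  · rintro ⟨rfl, rfl⟩
    simp [List.append_assoc]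

/-- A word over the single letter `x` parses only into copies of the group `φ₁ i₀ ++ φ₂ k₀`. -/
theorem length_pairEncoding_of_forall_mem_eq (hφ₁ : IsPrefixFree φ₁) (hφ₂ : IsPrefixFree φ₂)
    {x : α} {i₀ : ι} {k₀ : κ} (hi₀ : ∀ b ∈ φ₁ i₀, b = x) (hk₀ : ∀ b ∈ φ₂ k₀, b = x) :
    ∀ {ps : List (ι × κ)}, (∀ b ∈ pairEncoding φ₁ φ₂ ps, b = x) →
      (pairEncoding φ₁ φ₂ ps).length = ps.length * ((φ₁ i₀).length + (φ₂ k₀).length)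
  | [], _ => by simp
  | p :: ps, hps => by
    simp only [pairEncoding_cons, List.mem_append, or_imp, forall_and] at hps
    obtain ⟨⟨h₁, h₂⟩, hrest⟩ := hps
    rw [pairEncoding_cons, List.length_append, List.length_append,
      hφ₁.eq_of_forall_mem_eq h₁ hi₀, hφ₂.eq_of_forall_mem_eq h₂ hk₀,
      length_pairEncoding_of_forall_mem_eq hφ₁ hφ₂ hi₀ hk₀ hrest, List.length_cons]
    ring

theorem exists_forall_mem_eq_of_replicate_eq_pairEncoding (hφ₁ : IsPrefixFree φ₁)
    (hφ₂ : IsPrefixFree φ₂) {x : α} {m : ℕ} {ps : List (ι × κ)} (hps : ps ≠ [])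
    (h : List.replicate m x = pairEncoding φ₁ φ₂ ps) :
    ∃ i k, (∀ b ∈ φ₁ i, b = x) ∧ (∀ b ∈ φ₂ k, b = x) ∧
      m = ps.length * ((φ₁ i).length + (φ₂ k).length) := by
  obtain ⟨⟨i, k⟩, ps, rfl⟩ := List.exists_cons_of_ne_nil hps
  have hx : ∀ b ∈ pairEncoding φ₁ φ₂ ((i, k) :: ps), b = x := by
    rw [← h]
    exact fun _ => List.eq_of_mem_replicate
  have hi : ∀ b ∈ φ₁ i, b = x := fun b hb => hx b (by simp [hb])
  have hk : ∀ b ∈ φ₂ k, b = x := fun b hb => hx b (by simp [hb])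
  refine ⟨i, k, hi, hk, ?_⟩
  simpa [← h] using length_pairEncoding_of_forall_mem_eq hφ₁ hφ₂ hi hk hx

theorem length_eq_of_replicate_eq_append_pairEncoding (hφ₁ : IsPrefixFree φ₁)
    (hφ₂ : IsPrefixFree φ₂) {x : α} {i₀ : ι} {k₀ : κ} (hi₀ : ∀ b ∈ φ₁ i₀, b = x)
    (hk₀ : ∀ b ∈ φ₂ k₀, b = x) {m : ℕ} {k : κ} {ps : List (ι × κ)}
    (h : List.replicate m x = φ₂ k ++ pairEncoding φ₁ φ₂ ps) :
    m = (φ₂ k₀).length + ps.length * ((φ₁ i₀).length + (φ₂ k₀).length) := by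
  have hx : (∀ b ∈ φ₂ k, b = x) ∧ ∀ b ∈ pairEncoding φ₁ φ₂ ps, b = x := by
    rw [← List.forall_mem_append, ← h]
    exact fun _ => List.eq_of_mem_replicate
  obtain rfl : k₀ = k := hφ₂.eq_of_forall_mem_eq hk₀ hx.1
  simpa [length_pairEncoding_of_forall_mem_eq hφ₁ hφ₂ hi₀ hk₀ hx.2] using
    congrArg List.length h

theorem exists_forall_mem_eq_of_replicate_append_eq_pairEncoding {x : α} {w : List α} {n : ℕ}
    (hn : ∀ i, (φ₁ i).length ≤ n) {ps : List (ι × κ)} (hps : ps ≠ [])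
    (h : List.replicate n x ++ w = pairEncoding φ₁ φ₂ ps) : ∃ i, ∀ b ∈ φ₁ i, b = x := by
  obtain ⟨p, ps, rfl⟩ := List.exists_cons_of_ne_nil hps
  refine ⟨p.1, forall_mem_eq_of_prefix_replicate_append (w := w) ?_ (hn p.1)⟩
  rw [h, pairEncoding_cons, List.append_assoc]
  exact List.prefix_append _ _

end pairEncoding

/-- Theorem 1, second part: for every `m ≥ 1` the Fibonacci code
`Fib m` is not a `(Δ,k)`-code: there are no `d ≥ 1` and prefix encoding functions
`φ₁` (on `{0,…,d-1}`) and `φ₂` (on `{k : ℕ // k ≥ 1}`), with nonempty values,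
injective and with prefix-free images, such that every codeword of `Fib m` is a
concatenation of a nonempty sequence of groups `φ₁(Δ_j) ++ φ₂(k_j)`. -/
theorem fibCode_not_deltaK_code (m : ℕ) (hm : 1 ≤ m) :
    ¬ ∃ (d : ℕ) (φ₁ : Fin d → List Bool) (φ₂ : {k : ℕ // 0 < k} → List Bool),
      1 ≤ d ∧
      (∀ i, φ₁ i ≠ []) ∧ (∀ k, φ₂ k ≠ []) ∧
      Function.Injective φ₁ ∧ Function.Injective φ₂ ∧
      (∀ i j, φ₁ i <+: φ₁ j → i = j) ∧
      (∀ k l, φ₂ k <+: φ₂ l → k = l) ∧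
      (∀ w ∈ FibCode m, ∃ ps : List (Fin d × {k : ℕ // 0 < k}),
        ps ≠ [] ∧ w = (ps.map (fun p => φ₁ p.1 ++ φ₂ p.2)).flatten) := by
  rintro ⟨d, φ₁, φ₂, -, hne₁, hne₂, -, -, hφ₁, hφ₂, hparse⟩
  obtain ⟨ps, hps, hones⟩ := hparse _ (by simpa using replicate_append_replicate_mem_fibCode hm 0)
  obtain ⟨i₁, k₁, hi₁, hk₁, hmc⟩ :=
    exists_forall_mem_eq_of_replicate_eq_pairEncoding hφ₁ hφ₂ hps hones
  obtain ⟨qs, hqs, hzeros⟩ :=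
    hparse _ (replicate_append_replicate_mem_fibCode hm (∑ i, (φ₁ i).length))
  obtain ⟨i₀, hi₀⟩ := exists_forall_mem_eq_of_replicate_append_eq_pairEncoding
    (fun i => Finset.single_le_sum (f := fun j => (φ₁ j).length) (fun j _ => Nat.zero_le _)
      (Finset.mem_univ i)) hqs hzeros
  obtain ⟨rs, hrs, hparse₀⟩ := hparse _ (replicate_append_replicate_mem_fibCode hm (φ₁ i₀).length)
  obtain ⟨⟨i, k⟩, rs, rfl⟩ := List.exists_cons_of_ne_nil hrs
  rw [← List.eq_replicate_of_mem hi₀] at hparse₀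
  obtain ⟨-, hsplit⟩ := (pairEncoding_cons_eq_append_iff hφ₁).1 hparse₀.symm
  have hmβ := length_eq_of_replicate_eq_append_pairEncoding hφ₁ hφ₂ hi₁ hk₁ hsplit
  set c := (φ₁ i₁).length + (φ₂ k₁).length
  have hcβ : c ∣ (φ₂ k₁).length :=
    (Nat.dvd_add_left (dvd_mul_left c _)).1 (hmβ ▸ hmc ▸ dvd_mul_left c _)
  have hβc : (φ₂ k₁).length < c := by
    have := List.length_pos_iff.2 (hne₁ i₁)
    omega
  exact hne₂ k₁ (List.length_eq_zero_iff.1 (Nat.eq_zero_of_dvd_of_lt hcβ hβc))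
end

section
/- (Theorem 2.) Let 0 < m_1 < … < m_t be integers and let d be any integer with 0 ≤ d < m_1. Then every codeword w of the multi-delimiter code D_{m_1,…,m_t} can be written as a concatenation w = g_1 g_2 ⋯ g_r of a nonempty finite sequence of binary words, where each g_j has the form c ++ 1^{k-1}0 for some integer k ≥ 1 and some binary word c which is either the one-letter word 0 or a word of length d+1 whose first letter is 1. (In particular, D_{m_1,…,m_t} is a (Δ,k)-code.) -/
open Computability

def deltaKGroups (d : ℕ) : Language Bool :=
  {g | ∃ (c : List Bool) (k : ℕ), 1 ≤ k ∧
    (c = [false] ∨ (c.length = d + 1 ∧ c.head? = some true)) ∧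
    g = c ++ List.replicate (k - 1) true ++ [false]}

theorem Language.append_mem_kstar {α : Type*} {l : Language α} {a b : List α}
    (ha : a ∈ l) (hb : b ∈ l∗) : a ++ b ∈ l∗ :=
  (mul_kstar_le_kstar : l * l∗ ≤ l∗) (Language.append_mem_mul ha hb)

theorem Language.mem_kstar_of_mem {α : Type*} {l : Language α} {a : List α} (ha : a ∈ l) :
    a ∈ l∗ :=
  (le_kstar : l ≤ l∗) ha

theorem Language.exists_flatten_of_mem_kstar {α : Type*} {l : Language α} {x : List α}
    (hx : x ∈ l∗) (hne : x ≠ []) :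
    ∃ L : List (List α), L ≠ [] ∧ x = L.flatten ∧ ∀ y ∈ L, y ∈ l := by
  obtain ⟨L, rfl, hL⟩ := Language.mem_kstar.mp hx
  exact ⟨L, by rintro rfl; exact hne rfl, rfl, hL⟩

namespace deltaKGroups

variable {d : ℕ}

theorem false_cons_shortWord_mem (j : ℕ) : false :: shortWord j ∈ deltaKGroups d :=
  ⟨[false], j + 1, by omega, Or.inl rfl, by simp [shortWord]⟩

theorem true_cons_append_shortWord_mem {c : List Bool} (hc : c.length = d) (j : ℕ) :
    true :: c ++ shortWord j ∈ deltaKGroups d :=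
  ⟨true :: c, j + 1, by omega, Or.inr ⟨by simp [hc], rfl⟩, by simp [shortWord]⟩

theorem shortWord_mem {M : ℕ} (hM : d < M) : shortWord M ∈ deltaKGroups d := by
  obtain ⟨k, rfl⟩ := Nat.exists_eq_add_of_lt hM
  convert true_cons_append_shortWord_mem (List.length_replicate (n := d) (a := true)) k using 1
  rw [shortWord, shortWord, Nat.add_right_comm, List.replicate_add, List.replicate_succ]
  simp only [List.cons_append, List.append_assoc]

end deltaKGroups

theorem exists_shortWord_append_eq_append_delim (M : ℕ) (y : List Bool) :
    ∃ j r, y ++ delim M = shortWord j ++ r ∧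
      (r = shortWord M ∨ ∃ y', y'.length < y.length ∧ r = y' ++ delim M) := by
  induction y with
  | nil => exact ⟨0, shortWord M, rfl, Or.inl rfl⟩
  | cons b y ih =>
    cases b with
    | false => exact ⟨0, y ++ delim M, rfl, Or.inr ⟨y, by simp, rfl⟩⟩
    | true =>
      obtain ⟨j, r, hy, hr⟩ := ih
      refine ⟨j + 1, r, by simp [hy, shortWord, List.replicate_succ], ?_⟩
      exact hr.imp_right fun ⟨y', hlen, hy'⟩ => ⟨y', by simp; omega, hy'⟩

theorem append_append_delim_mem_kstar {d M : ℕ} (hM : d < M) {c y : List Bool}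
    (hc : ∀ j, c ++ shortWord j ∈ deltaKGroups d)
    (ih : ∀ y' : List Bool, y'.length < y.length → y' ++ delim M ∈ (deltaKGroups d)∗) :
    c ++ (y ++ delim M) ∈ (deltaKGroups d)∗ := by
  obtain ⟨j, r, hy, hr⟩ := exists_shortWord_append_eq_append_delim M y
  rw [hy, ← List.append_assoc]
  refine Language.append_mem_kstar (hc j) ?_
  rcases hr with rfl | ⟨y', hlen, rfl⟩
  · exact Language.mem_kstar_of_mem (deltaKGroups.shortWord_mem hM)
  · exact ih y' hlen

theorem append_delim_mem_kstar {d M : ℕ} (hM : d < M) (y : List Bool) :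
    y ++ delim M ∈ (deltaKGroups d)∗ := by
  induction h : y.length using Nat.strong_induction_on generalizing y with
  | _ n ih =>
  rcases y with _ | ⟨_ | _, y⟩
  · exact Language.mem_kstar_of_mem (deltaKGroups.false_cons_shortWord_mem M)
  · exact append_append_delim_mem_kstar hM (c := [false]) deltaKGroups.false_cons_shortWord_mem
      fun y' hy' => ih _ (by simp at h; omega) y' rfl
  · by_cases hy : d ≤ y.length
    · have := append_append_delim_mem_kstar hM (c := true :: y.take d) (y := y.drop d)
        (deltaKGroups.true_cons_append_shortWord_mem (by simpa using hy))
        fun y' hy' => ih _ (by simp at h hy'; omega) y' rfl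
      rwa [List.cons_append, ← List.append_assoc, List.take_append_drop] at this
    -- the `d` letters after the leading `1` reach into the delimiter: the word is a single group
    · obtain ⟨e, he⟩ := Nat.exists_eq_add_of_lt (not_le.mp hy)
      have := deltaKGroups.true_cons_append_shortWord_mem (d := d)
        (c := y ++ false :: List.replicate e true) (by simp; omega) (M - e)
      convert Language.mem_kstar_of_mem this using 1
      simp only [delim, shortWord, List.cons_append, List.append_assoc]
      rw [← List.append_assoc (List.replicate e true), ← List.replicate_add,
        Nat.add_sub_cancel' (by omega)]

theorem multiDelim_is_deltaK_code_general {t : ℕ} (ht : 0 < t) (m : Fin t → ℕ)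
    (hmono : StrictMono m)
    (d : ℕ) (hd : d < m ⟨0, ht⟩) :
    ∀ w ∈ MultiDelim m, ∃ gs : List (List Bool), gs ≠ [] ∧ w = gs.flatten ∧
      ∀ g ∈ gs, ∃ (c : List Bool) (k : ℕ), 1 ≤ k ∧
        (c = [false] ∨ (c.length = d + 1 ∧ c.head? = some true)) ∧
        g = c ++ List.replicate (k - 1) true ++ [false] := by
  intro w hw
  have hdm : ∀ i, d < m i := fun i => hd.trans_le (hmono.monotone (Nat.zero_le _))
  have hmem : w ∈ (deltaKGroups d)∗ ∧ w ≠ [] := by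
    rcases hw with ⟨i, rfl⟩ | ⟨-, ⟨i, y, rfl⟩, -⟩
    · exact ⟨Language.mem_kstar_of_mem (deltaKGroups.shortWord_mem (hdm i)),
        by simp [shortWord]⟩
    · exact ⟨append_delim_mem_kstar (hdm i) y, by simp [delim]⟩
  exact Language.exists_flatten_of_mem_kstar hmem.1 hmem.2

/-- Theorem 2: for `0 < m_1 < … < m_t` and any `0 ≤ d < m_1`, every
codeword of `D_{m_1,…,m_t}` is a concatenation of a nonempty sequence of
`(Δ,k)`-groups `c ++ 1^{k-1} 0`, where `k ≥ 1` and `c` is either the one-letter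
word `0` or a word of length `d+1` starting with `1`. -/
theorem multiDelim_is_deltaK_code {t : ℕ} (ht : 0 < t) (m : Fin t → ℕ)
    (hpos : ∀ i, 0 < m i) (hmono : StrictMono m)
    (d : ℕ) (hd : d < m ⟨0, ht⟩) :
    ∀ w ∈ MultiDelim m, ∃ gs : List (List Bool), gs ≠ [] ∧ w = gs.flatten ∧
      ∀ g ∈ gs, ∃ (c : List Bool) (k : ℕ), 1 ≤ k ∧
        (c = [false] ∨ (c.length = d + 1 ∧ c.head? = some true)) ∧
        g = c ++ List.replicate (k - 1) true ++ [false] :=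
  multiDelim_is_deltaK_code_general ht m hmono d hd
end

section
/- (Theorem 3.) Every multi-delimiter code is complete: for any integers 0 < m_1 < … < m_t, the Kraft sum of the code D_{m_1,…,m_t} equals 1, i.e. the series ∑_{w ∈ D_{m_1,…,m_t}} 2^{−|w|} converges and its sum is exactly 1. Equivalently, ∑_{n=1}^∞ f_n 2^{−n} = 1, where f_n is the number of codewords of D_{m_1,…,m_t} of length n. -/
/-!
For a prefix-free code `C` over an alphabet of size `k`, the Kraft sum over the codewords of
length at most `n` equals the proportion of words of length `n` having a prefix in `C`. If every
word containing a fixed word `p` has a prefix in `C`, then the words of length `q * |p|` without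
such a prefix avoid `p` in each of their `q` blocks, so their proportion is at most
`(1 - k^{-|p|})^q → 0`, and the Kraft sum is `1`. The code `D_{m_1,…,m_t}` is prefix-free and
`p = 0 1^{m_1} 0` qualifies: in a word containing it, the shortest prefix that is some `1^{m_i}0`
or ends in some delimiter `0 1^{m_i} 0` is a codeword.
-/

open Finset Filter Topology

open scoped Classical

theorem hasSum_of_sum_le_of_tendsto {ι : Type*} {f : ι → ℝ} {a : ℝ} (hf : ∀ i, 0 ≤ f i)
    (hle : ∀ s : Finset ι, ∑ i ∈ s, f i ≤ a) {s : ℕ → Finset ι}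
    (hs : Tendsto (fun j => ∑ i ∈ s j, f i) atTop (𝓝 a)) : HasSum f a :=
  hasSum_of_isLUB_of_nonneg a hf
    ⟨by rintro _ ⟨t, rfl⟩; exact hle t, fun _ hx => le_of_tendsto' hs fun j => hx ⟨s j, rfl⟩⟩

section PrefixCodes

variable {α : Type*}

def PrefixFree (C : Set (List α)) : Prop :=
  ∀ ⦃u v⦄, u ∈ C → v ∈ C → u <+: v → u = v

variable [Fintype α]

variable (α) in
def wordsOfLength (n : ℕ) : Finset (List α) :=
  (univ : Finset (List.Vector α n)).map ⟨List.Vector.toList, List.Vector.toList_injective⟩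

@[simp]
theorem mem_wordsOfLength {n : ℕ} {u : List α} : u ∈ wordsOfLength α n ↔ u.length = n :=
  ⟨fun hu => by obtain ⟨v, -, rfl⟩ := Finset.mem_map.mp hu; exact v.toList_length,
    fun h => Finset.mem_map.mpr ⟨⟨u, h⟩, mem_univ _, rfl⟩⟩

theorem card_wordsOfLength (n : ℕ) : #(wordsOfLength α n) = Fintype.card α ^ n := by
  simp [wordsOfLength, card_vector]

theorem card_filter_prefix_wordsOfLength {w : List α} {n : ℕ} (hw : w.length ≤ n) :
    #{u ∈ wordsOfLength α n | w <+: u} = Fintype.card α ^ (n - w.length) := by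
  have himage : {u ∈ wordsOfLength α n | w <+: u}
      = (wordsOfLength α (n - w.length)).map ⟨(w ++ ·), List.append_right_injective w⟩ := by
    ext u
    simp only [mem_filter, Finset.mem_map, mem_wordsOfLength, Function.Embedding.coeFn_mk]
    constructor
    · rintro ⟨hu, v, rfl⟩
      exact ⟨v, by simp only [List.length_append] at hu; omega, rfl⟩
    · rintro ⟨v, hv, rfl⟩
      exact ⟨by simp only [List.length_append]; omega, List.prefix_append w v⟩
  rw [himage, card_map, card_wordsOfLength]

theorem card_filter_not_infix_wordsOfLength_le (p : List α) (q : ℕ) :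
    #{u ∈ wordsOfLength α (q * p.length) | ¬ p <:+: u} ≤ (Fintype.card α ^ p.length - 1) ^ q := by
  induction q with
  | zero => simpa [card_wordsOfLength] using card_filter_le (wordsOfLength α 0) _
  | succ q ih =>
    calc _ ≤ #((wordsOfLength α p.length).erase p
          ×ˢ {u ∈ wordsOfLength α (q * p.length) | ¬ p <:+: u}) := by
          refine card_le_card_of_injOn (fun u => (u.take p.length, u.drop p.length))
            (fun u hu => ?_) (fun u _ v _ h => ?_)
          · simp only [coe_filter, Set.mem_ofPred_eq, mem_wordsOfLength] at hu
            simp only [coe_product, coe_erase, coe_filter, Set.mem_prod, Set.mem_sdiff,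
              Set.mem_singleton_iff, mem_coe, mem_wordsOfLength, Set.mem_ofPred_eq,
              List.length_take, List.length_drop]
            refine ⟨⟨by rw [hu.1, add_mul]; omega,
                fun h => hu.2 (h ▸ (List.take_prefix _ u).isInfix)⟩,
              by rw [hu.1, add_mul]; omega, fun h => hu.2 (h.trans (List.drop_suffix _ u).isInfix)⟩
          · obtain ⟨htake, hdrop⟩ := Prod.ext_iff.mp h
            rw [← List.take_append_drop p.length u, ← List.take_append_drop p.length v]
            exact congrArg₂ (· ++ ·) htake hdrop
      _ ≤ (Fintype.card α ^ p.length - 1) * (Fintype.card α ^ p.length - 1) ^ q := by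
          rw [card_product, card_erase_of_mem (by simp), card_wordsOfLength]
          exact Nat.mul_le_mul_left _ ih
      _ = _ := (pow_succ' _ _).symm

noncomputable def codewordsUpTo (C : Set (List α)) (n : ℕ) : Finset (List α) :=
  {w ∈ (range (n + 1)).biUnion (wordsOfLength α) | w ∈ C}

@[simp]
theorem mem_codewordsUpTo {C : Set (List α)} {n : ℕ} {w : List α} :
    w ∈ codewordsUpTo C n ↔ w ∈ C ∧ w.length ≤ n := by
  simp [codewordsUpTo, and_comm]

noncomputable def prefixedWords (C : Set (List α)) (n : ℕ) : Finset (List α) :=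
  {u ∈ wordsOfLength α n | ∃ w ∈ C, w <+: u}

theorem PrefixFree.card_prefixedWords {C : Set (List α)} (hC : PrefixFree C) (n : ℕ) :
    #(prefixedWords C n) = ∑ w ∈ codewordsUpTo C n, Fintype.card α ^ (n - w.length) := by
  have hunion : prefixedWords C n
      = (codewordsUpTo C n).biUnion fun w => {u ∈ wordsOfLength α n | w <+: u} := by
    ext u
    simp only [prefixedWords, mem_filter, mem_biUnion, mem_codewordsUpTo, mem_wordsOfLength]
    constructor
    · rintro ⟨hu, w, hw, hwu⟩
      exact ⟨w, ⟨hw, hu ▸ hwu.length_le⟩, hu, hwu⟩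
    · rintro ⟨w, ⟨hw, -⟩, hu, hwu⟩
      exact ⟨hu, w, hw, hwu⟩
  rw [hunion, card_biUnion]
  · exact sum_congr rfl fun w hw => card_filter_prefix_wordsOfLength (mem_codewordsUpTo.mp hw).2
  · intro w hw w' hw' hne
    refine disjoint_left.mpr fun u hu hu' => hne ?_
    have hw := (mem_codewordsUpTo.mp hw).1
    have hw' := (mem_codewordsUpTo.mp hw').1
    rcases List.prefix_or_prefix_of_prefix (mem_filter.mp hu).2 (mem_filter.mp hu').2 with h | h
    · exact hC hw hw' h
    · exact (hC hw' hw h).symm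

theorem prefixedWords_density_le_one (C : Set (List α)) (n : ℕ) :
    (#(prefixedWords C n) : ℝ) / Fintype.card α ^ n ≤ 1 := by
  refine div_le_one_of_le₀ ?_ (by positivity)
  exact_mod_cast (card_filter_le _ _).trans_eq (card_wordsOfLength n)

theorem card_wordsOfLength_le_card_prefixedWords_add {C : Set (List α)} {p : List α}
    (hp : ∀ u, p <:+: u → ∃ w ∈ C, w <+: u) (q : ℕ) :
    Fintype.card α ^ (q * p.length)
      ≤ #(prefixedWords C (q * p.length)) + (Fintype.card α ^ p.length - 1) ^ q := by
  rw [← card_wordsOfLength, prefixedWords,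
    ← card_filter_add_card_filter_not (fun u => ∃ w ∈ C, w <+: u)]
  refine Nat.add_le_add_left ((card_le_card fun u hu => ?_).trans
    (card_filter_not_infix_wordsOfLength_le p q)) _
  simp only [mem_filter] at hu ⊢
  exact ⟨hu.1, fun h => hu.2 (hp u h)⟩

variable [Nonempty α]

theorem PrefixFree.sum_codewordsUpTo_eq_prefixedWords_density {C : Set (List α)}
    (hC : PrefixFree C) (n : ℕ) :
    ∑ w ∈ codewordsUpTo C n, ((Fintype.card α : ℝ) ^ w.length)⁻¹
      = #(prefixedWords C n) / Fintype.card α ^ n := by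
  rw [hC.card_prefixedWords, Nat.cast_sum, sum_div]
  refine sum_congr rfl fun w hw => ?_
  rw [Nat.cast_pow, pow_sub₀ _ (by positivity) (mem_codewordsUpTo.mp hw).2]
  field_simp

theorem PrefixFree.hasSum_kraft_of_tendsto {C : Set (List α)} (hC : PrefixFree C) {n : ℕ → ℕ}
    (h : Tendsto (fun j => (#(prefixedWords C (n j)) : ℝ) / Fintype.card α ^ n j) atTop (𝓝 1)) :
    HasSum (fun w : C => ((Fintype.card α : ℝ) ^ (w : List α).length)⁻¹) 1 := by
  have hsum : ∀ N, ∑ w ∈ (codewordsUpTo C N).subtype (· ∈ C),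
      ((Fintype.card α : ℝ) ^ (w : List α).length)⁻¹
        = #(prefixedWords C N) / Fintype.card α ^ N := fun N => by
    rw [sum_subtype_of_mem (fun w : List α => ((Fintype.card α : ℝ) ^ w.length)⁻¹)
      fun w hw => (mem_codewordsUpTo.mp hw).1]
    exact hC.sum_codewordsUpTo_eq_prefixedWords_density N
  refine hasSum_of_sum_le_of_tendsto (fun _ => by positivity) (fun s => ?_)
    (s := fun j => (codewordsUpTo C (n j)).subtype (· ∈ C)) (by simpa only [hsum] using h)
  calc ∑ w ∈ s, ((Fintype.card α : ℝ) ^ (w : List α).length)⁻¹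
      ≤ ∑ w ∈ (codewordsUpTo C (s.sup fun w => (w : List α).length)).subtype (· ∈ C),
          ((Fintype.card α : ℝ) ^ (w : List α).length)⁻¹ := by
        refine sum_le_sum_of_subset_of_nonneg (fun w hw => ?_) fun _ _ _ => by positivity
        simp only [mem_subtype, mem_codewordsUpTo]
        exact ⟨w.2, le_sup (f := fun w : C => (w : List α).length) hw⟩
    _ ≤ 1 := (hsum _).trans_le (prefixedWords_density_le_one C _)

theorem tendsto_prefixedWords_density {C : Set (List α)} {p : List α}
    (hp : ∀ u, p <:+: u → ∃ w ∈ C, w <+: u) :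
    Tendsto (fun q => (#(prefixedWords C (q * p.length)) : ℝ) / Fintype.card α ^ (q * p.length))
      atTop (𝓝 1) := by
  have hk : 1 ≤ Fintype.card α ^ p.length := Nat.one_le_pow _ _ Fintype.card_pos
  set c : ℝ := 1 - ((Fintype.card α : ℝ) ^ p.length)⁻¹
  have hc0 : 0 ≤ c := sub_nonneg.mpr (inv_le_one_of_one_le₀ (by exact_mod_cast hk))
  have hc1 : c < 1 := sub_lt_self _ (by positivity)
  have hlow (q : ℕ) : 1 - c ^ q
      ≤ (#(prefixedWords C (q * p.length)) : ℝ) / Fintype.card α ^ (q * p.length) := by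
    have hcount : ((Fintype.card α ^ (q * p.length) : ℕ) : ℝ)
        ≤ #(prefixedWords C (q * p.length)) + ((Fintype.card α ^ p.length - 1 : ℕ) : ℝ) ^ q := by
      exact_mod_cast card_wordsOfLength_le_card_prefixedWords_add hp q
    have hc : c ^ q * (Fintype.card α : ℝ) ^ (q * p.length)
        = ((Fintype.card α ^ p.length - 1 : ℕ) : ℝ) ^ q := by
      rw [Nat.cast_sub hk, mul_comm q, pow_mul, ← mul_pow]
      push_cast
      congr 1
      simp only [c]
      field_simp
    rw [le_div_iff₀ (by positivity), sub_mul, one_mul, hc]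
    push_cast at hcount
    linarith
  exact tendsto_of_tendsto_of_tendsto_of_le_of_le
    (by simpa using (tendsto_pow_atTop_nhds_zero_of_lt_one hc0 hc1).const_sub 1)
    tendsto_const_nhds hlow fun q => prefixedWords_density_le_one C _

end PrefixCodes

section MultiDelim

variable {t : ℕ} (m : Fin t → ℕ)

theorem eq_shortWord_of_prefix_of_false_mem {w : List Bool} {k : ℕ} (h : w <+: shortWord k)
    (hw : false ∈ w) : w = shortWord k := by
  rcases List.prefix_concat_iff.mp h with h | h
  · exact h
  · exact absurd (List.eq_of_mem_replicate (h.subset hw)) Bool.false_ne_true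

theorem false_mem_of_mem_multiDelim {w : List Bool} (hw : w ∈ MultiDelim m) : false ∈ w := by
  rcases hw with ⟨i, rfl⟩ | ⟨-, ⟨i, u, rfl⟩, -⟩ <;> simp [shortWord, delim]

theorem multiDelim_prefixFree_s4 : PrefixFree (MultiDelim m) := by
  intro w₁ w₂ h₁ h₂ hp
  rcases h₂ with ⟨j, rfl⟩ | ⟨hshort, -, honly⟩
  · exact eq_shortWord_of_prefix_of_false_mem hp (false_mem_of_mem_multiDelim m h₁)
  · rcases h₁ with ⟨i, rfl⟩ | ⟨-, ⟨i, u, rfl⟩, -⟩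
    · exact absurd hp (hshort i)
    · obtain ⟨v, rfl⟩ := hp
      rw [honly i u v rfl, List.append_nil]

theorem exists_mem_multiDelim_prefix_of_infix {u : List Bool} :
    (∃ i, delim (m i) <:+: u) → ∃ w ∈ MultiDelim m, w <+: u := by
  induction u using List.reverseRecOn with
  | nil => rintro ⟨i, h⟩; simp [delim] at h
  | append_singleton u a ih =>
    rintro ⟨i, hi⟩
    by_cases hshort : ∃ j, shortWord (m j) <+: u ++ [a]
    · obtain ⟨j, hj⟩ := hshort
      exact ⟨_, Or.inl ⟨j, rfl⟩, hj⟩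
    by_cases hu : ∃ j, delim (m j) <:+: u
    · obtain ⟨w, hw, hwu⟩ := ih hu
      exact ⟨w, hw, hwu.trans (List.prefix_append u [a])⟩
    push Not at hshort hu
    refine ⟨u ++ [a], Or.inr ⟨hshort, ⟨i, ?_⟩, fun j x v heq => ?_⟩, List.prefix_rfl⟩
    · exact (List.infix_concat_iff.mp hi).resolve_right (hu i)
    · have hpre : x ++ delim (m j) <+: u ++ [a] := heq ▸ List.prefix_append _ v
      rcases List.prefix_concat_iff.mp hpre with h | h
      · rw [← h] at heq
        simpa using heq
      · exact absurd ((List.suffix_append x _).isInfix.trans h.isInfix) (hu j)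

end MultiDelim

theorem multiDelim_complete_general {t : ℕ} (ht : 0 < t) (m : Fin t → ℕ) :
    HasSum (fun w : MultiDelim m => ((2 : ℝ) ^ (w : List Bool).length)⁻¹) 1 := by
  have h := (multiDelim_prefixFree_s4 m).hasSum_kraft_of_tendsto
    (tendsto_prefixedWords_density (p := delim (m ⟨0, ht⟩))
      fun _ hu => exists_mem_multiDelim_prefix_of_infix m ⟨_, hu⟩)
  simpa using h

/-- Theorem 3: every multi-delimiter code is complete: the Kraft sum
`∑_{w ∈ D_{m_1,…,m_t}} 2^{-|w|}` converges and equals `1`. -/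
theorem multiDelim_complete {t : ℕ} (ht : 0 < t) (m : Fin t → ℕ)
    (hpos : ∀ i, 0 < m i) (hmono : StrictMono m) :
    HasSum (fun w : MultiDelim m => ((2 : ℝ) ^ (w : List Bool).length)⁻¹) 1 :=
  multiDelim_complete_general ht m
end

section
/- For any integers 0 < m_1 < … < m_t, the number f_n of codewords of length n in the multi-delimiter code D_{m_1,…,m_t} satisfies, for every n ≥ 2, the recurrence f_n = T_n − T_{n−1} + f_{n−1} + 2 f_{n−2} − ∑_{i=1}^{t} f_{n−m_i−1} + ∑_{i=1}^{t} f_{n−m_i−3}, where f_j = 0 for j ≤ 0 and T_j denotes the number of elements of the multiset {m_1+1, m_1+2, …, m_t+1, m_t+2} equal to j. -/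
/-- `fD m n` is the number of codewords of `D_{m_1,…,m_t}` of length `n`
(in particular it vanishes for `n = 0`). -/
noncomputable def fD {t : ℕ} (m : Fin t → ℕ) (n : ℕ) : ℕ :=
  Set.ncard {w ∈ MultiDelim m | w.length = n}

/-- `TD m j` is the number of elements of the multiset
`{m_1+1, m_1+2, …, m_t+1, m_t+2}` equal to `j`. -/
def TD {t : ℕ} (m : Fin t → ℕ) (j : ℕ) : ℕ :=
  (Finset.univ.filter fun i => m i + 1 = j).card +
  (Finset.univ.filter fun i => m i + 2 = j).card

/- ### Auxiliary development -/

open List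

/-- Pre-codewords: end with a delimiter, and delimiters occur only at the end. -/
def PreC {t : ℕ} (m : Fin t → ℕ) (w : List Bool) : Prop :=
  (∃ i, delim (m i) <:+ w) ∧ (∀ i u v, w = u ++ delim (m i) ++ v → v = [])

/-- Long codewords. -/
def LgC {t : ℕ} (m : Fin t → ℕ) (w : List Bool) : Prop :=
  (∀ i, ¬ shortWord (m i) <+: w) ∧ PreC m w

lemma mem_MD {t : ℕ} (m : Fin t → ℕ) (w : List Bool) :
    w ∈ MultiDelim m ↔ (∃ i, w = shortWord (m i)) ∨ LgC m w := Iff.rfl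

lemma shortWord_append (a : ℕ) (v : List Bool) :
    shortWord a ++ v = List.replicate a true ++ false :: v := by
  simp [shortWord]

lemma delim_eq (a : ℕ) : delim a = false :: shortWord a := rfl

lemma ones_eq : ∀ (a b : ℕ) (x y : List Bool),
    List.replicate a true ++ false :: x = List.replicate b true ++ false :: y →
    a = b ∧ x = y := by
  intro a
  induction a with
  | zero =>
    intro b x y h
    cases b with
    | zero => simpa using h
    | succ b => simp [List.replicate_succ] at h
  | succ a ih =>
    intro b x y h
    cases b with
    | zero => simp [List.replicate_succ] at h
    | succ b =>
      simp only [List.replicate_succ, List.cons_append, List.cons.injEq, true_and] at h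
      obtain ⟨h1, h2⟩ := ih b x y h
      exact ⟨by omega, h2⟩

lemma shortWord_inj : Function.Injective shortWord := by
  intro a b h
  have : List.replicate a true ++ false :: ([] : List Bool)
      = List.replicate b true ++ false :: [] := by simpa [shortWord] using h
  exact (ones_eq _ _ _ _ this).1

lemma shortWord_prefix_unique {a b : ℕ} {w : List Bool}
    (ha : shortWord a <+: w) (hb : shortWord b <+: w) : a = b := by
  have key : ∀ {c d : ℕ}, shortWord c <+: shortWord d → c = d := by
    intro c d ⟨z, hz⟩
    have : List.replicate c true ++ false :: z
        = List.replicate d true ++ false :: ([] : List Bool) := by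
      simpa [shortWord_append, shortWord] using hz
    exact (ones_eq _ _ _ _ this).1
  rcases List.prefix_or_prefix_of_prefix ha hb with h | h
  · exact key h
  · exact (key h).symm

section Core

variable {t : ℕ} (m : Fin t → ℕ)

lemma preC_true_cons (v : List Bool) : PreC m (true :: v) ↔ PreC m v := by
  constructor
  · rintro ⟨⟨i, hsuf⟩, honly⟩
    refine ⟨⟨i, ?_⟩, ?_⟩
    · rcases List.suffix_cons_iff.1 hsuf with h | h
      · simp [delim] at h
      · exact h
    · intro i u v' h
      exact honly i (true :: u) v' (by simp [h])
  · rintro ⟨⟨i, hsuf⟩, honly⟩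
    refine ⟨⟨i, hsuf.trans (List.suffix_cons _ _)⟩, ?_⟩
    intro i u v' h
    cases u with
    | nil => simp [delim] at h
    | cons b u =>
      simp only [List.cons_append, List.cons.injEq] at h
      exact honly i u v' h.2

lemma preC_false_cons (v : List Bool) : PreC m (false :: v) ↔ v ∈ MultiDelim m := by
  constructor
  · rintro ⟨⟨i, hsuf⟩, honly⟩
    by_cases hs : ∃ j, shortWord (m j) <+: v
    · obtain ⟨j, z, hz⟩ := hs
      have hz' : false :: v = [] ++ delim (m j) ++ z := by
        simp [delim_eq, ← hz]
      have hznil := honly j [] z hz'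
      subst hznil
      exact Or.inl ⟨j, by simpa using hz.symm⟩
    · push_neg at hs
      refine Or.inr ⟨hs, ⟨i, ?_⟩, ?_⟩
      · rcases List.suffix_cons_iff.1 hsuf with h | h
        · exfalso
          have : v = shortWord (m i) := by
            have := h.symm
            rw [delim_eq] at this
            exact (List.cons.injEq _ _ _ _ ▸ this).2
          exact hs i (this ▸ List.prefix_refl _)
        · exact h
      · intro i u v' h
        exact honly i (false :: u) v' (by simp [h])
  · intro hv
    rcases hv with ⟨i, rfl⟩ | ⟨hnsp, ⟨i, hsuf⟩, honly⟩
    · refine ⟨⟨i, by rw [← delim_eq]⟩, ?_⟩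
      intro k u v' h
      cases u with
      | nil =>
        simp only [List.nil_append] at h
        rw [delim_eq, List.cons_append] at h
        have h' : shortWord (m i) = shortWord (m k) ++ v' :=
          (List.cons.injEq _ _ _ _ ▸ h).2
        have : List.replicate (m i) true ++ false :: ([] : List Bool)
            = List.replicate (m k) true ++ false :: v' := by
          simpa [shortWord, shortWord_append] using h'
        exact (ones_eq _ _ _ _ this).2.symm
      | cons b u =>
        exfalso
        simp only [List.cons_append] at h
        have hb : (false : Bool) = b := (List.cons.injEq _ _ _ _ ▸ h).1
        have htail : shortWord (m i) = u ++ delim (m k) ++ v' :=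
          (List.cons.injEq _ _ _ _ ▸ h).2
        have hc := congrArg (List.count false) htail
        simp [shortWord, delim, List.count_append, List.count_replicate,
          List.count_cons] at hc
        omega
    · refine ⟨⟨i, hsuf.trans (List.suffix_cons _ _)⟩, ?_⟩
      intro k u v' h
      cases u with
      | nil =>
        exfalso
        simp only [List.nil_append] at h
        rw [delim_eq, List.cons_append] at h
        have h' : v = shortWord (m k) ++ v' := (List.cons.injEq _ _ _ _ ▸ h).2
        exact hnsp k ⟨v', h'.symm⟩
      | cons b u =>
        simp only [List.cons_append, List.cons.injEq] at h
        exact honly k u v' h.2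

lemma preC_replicate (a : ℕ) (x : List Bool) :
    PreC m (List.replicate a true ++ x) ↔ PreC m x := by
  induction a with
  | zero => simp
  | succ a ih =>
    rw [List.replicate_succ, List.cons_append, preC_true_cons]
    exact ih

lemma preC_shortWord_append (a : ℕ) (v : List Bool) :
    PreC m (shortWord a ++ v) ↔ v ∈ MultiDelim m := by
  rw [shortWord_append, preC_replicate, preC_false_cons]

lemma not_preC_nil : ¬ PreC m [] := by
  rintro ⟨⟨i, hsuf⟩, -⟩
  have := List.suffix_nil.1 hsuf
  simp [delim] at this

lemma nil_not_mem_MD : [] ∉ MultiDelim m := by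
  rw [mem_MD]
  rintro (⟨i, hi⟩ | ⟨-, hpre⟩)
  · simp [shortWord] at hi
  · exact not_preC_nil m hpre

/- ### Counting sets -/

def MDs (n : ℕ) : Set (List Bool) := {w | w ∈ MultiDelim m ∧ w.length = n}

def Ps (n : ℕ) : Set (List Bool) := {w | PreC m w ∧ w.length = n}

def Gs (n : ℕ) : Set (List Bool) := {w | LgC m w ∧ w.length = n}

noncomputable def pD (n : ℕ) : ℕ := (Ps m n).ncard

noncomputable def gD (n : ℕ) : ℕ := (Gs m n).ncard

def sD (n : ℕ) : ℕ := (Finset.univ.filter fun i => m i + 1 = n).card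

lemma fD_eq (n : ℕ) : fD m n = (MDs m n).ncard := rfl

lemma MDs_finite (n : ℕ) : (MDs m n).Finite :=
  (List.finite_length_eq Bool n).subset fun _ hw => hw.2

lemma Ps_finite (n : ℕ) : (Ps m n).Finite :=
  (List.finite_length_eq Bool n).subset fun _ hw => hw.2

lemma Gs_finite (n : ℕ) : (Gs m n).Finite :=
  (List.finite_length_eq Bool n).subset fun _ hw => hw.2

lemma fD_zero : fD m 0 = 0 := by
  rw [fD_eq]
  convert Set.ncard_empty (List Bool)
  ext w
  simp only [MDs, Set.mem_setOf_eq, Set.mem_empty_iff_false, iff_false, not_and]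
  intro hmem hlen
  rw [List.length_eq_zero_iff] at hlen
  exact nil_not_mem_MD m (hlen ▸ hmem)

end Core

section Counting

variable {t : ℕ} (m : Fin t → ℕ)

/-- L1 : `f n = g n + s n`. -/
lemma L1 (hm : Function.Injective m) (n : ℕ) : fD m n = gD m n + sD m n := by
  classical
  have hset : MDs m n =
      (↑((Finset.univ.filter fun i => m i + 1 = n).image fun i => shortWord (m i)) :
        Set (List Bool)) ∪ Gs m n := by
    ext w
    simp only [MDs, Set.mem_setOf_eq, Set.mem_union, Finset.coe_image, Set.mem_image,
      Finset.mem_coe, Finset.mem_filter, Finset.mem_univ, true_and, Gs]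
    constructor
    · rintro ⟨hmem, hlen⟩
      rcases (mem_MD m w).1 hmem with ⟨i, rfl⟩ | hlg
      · left
        exact ⟨i, by simpa [shortWord] using hlen, rfl⟩
      · exact Or.inr ⟨hlg, hlen⟩
    · rintro (⟨i, hi, rfl⟩ | ⟨hlg, hlen⟩)
      · exact ⟨(mem_MD m _).2 (Or.inl ⟨i, rfl⟩), by simpa [shortWord] using hi⟩
      · exact ⟨(mem_MD m _).2 (Or.inr hlg), hlen⟩
  have hdisj : Disjoint
      (↑((Finset.univ.filter fun i => m i + 1 = n).image fun i => shortWord (m i)) :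
        Set (List Bool)) (Gs m n) := by
    rw [Set.disjoint_left]
    rintro w hw hw'
    simp only [Finset.coe_image, Set.mem_image, Finset.mem_coe] at hw
    obtain ⟨i, -, rfl⟩ := hw
    exact hw'.1.1 i (List.prefix_refl _)
  have hinj : Function.Injective fun i => shortWord (m i) :=
    fun a b h => hm (shortWord_inj h)
  rw [fD_eq, hset, Set.ncard_union_eq hdisj (Finset.finite_toSet _) (Gs_finite m n),
    Set.ncard_coe_finset, Finset.card_image_of_injective _ hinj, gD, sD]
  omega

/-- L2 : `p (k+1) = f k + p k`. -/
lemma L2 (k : ℕ) : pD m (k + 1) = fD m k + pD m k := by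
  have hset : Ps m (k + 1) =
      (fun v => false :: v) '' MDs m k ∪ (fun v => true :: v) '' Ps m k := by
    ext w
    simp only [Ps, Set.mem_setOf_eq, Set.mem_union, Set.mem_image, MDs]
    constructor
    · rintro ⟨hp, hl⟩
      cases w with
      | nil => simp at hl
      | cons b v =>
        simp only [List.length_cons, Nat.add_left_inj] at hl
        cases b with
        | false => exact Or.inl ⟨v, ⟨(preC_false_cons m v).1 hp, hl⟩, rfl⟩
        | true => exact Or.inr ⟨v, ⟨(preC_true_cons m v).1 hp, hl⟩, rfl⟩
    · rintro (⟨v, ⟨hv, hl⟩, rfl⟩ | ⟨v, ⟨hv, hl⟩, rfl⟩)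
      · exact ⟨(preC_false_cons m v).2 hv, by simp [hl]⟩
      · exact ⟨(preC_true_cons m v).2 hv, by simp [hl]⟩
  have hdisj : Disjoint ((fun v => false :: v) '' MDs m k)
      ((fun v => true :: v) '' Ps m k) := by
    rw [Set.disjoint_left]
    rintro w ⟨v, -, rfl⟩ ⟨v', -, h⟩
    simp at h
  have hinj : ∀ b : Bool, Function.Injective fun v : List Bool => b :: v := by
    intro b x y h
    injection h
  rw [pD, hset, Set.ncard_union_eq hdisj ((MDs_finite m k).image _)
    ((Ps_finite m k).image _), Set.ncard_image_of_injective _ (hinj false),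
    Set.ncard_image_of_injective _ (hinj true)]
  rfl

/-- The set of pre-codewords of length `k` starting with `1^{m j} 0`. -/
def Qs (j : Fin t) (k : ℕ) : Set (List Bool) :=
  {w | PreC m w ∧ w.length = k ∧ shortWord (m j) <+: w}

lemma Qs_finite (j : Fin t) (k : ℕ) : (Qs m j k).Finite :=
  (List.finite_length_eq Bool k).subset fun _ hw => hw.2.1

lemma Qs_ncard (j : Fin t) (k : ℕ) : (Qs m j k).ncard = fD m (k - m j - 1) := by
  by_cases hk : m j + 1 ≤ k
  · have hset : Qs m j k = (fun v => shortWord (m j) ++ v) '' MDs m (k - m j - 1) := by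
      ext w
      simp only [Qs, Set.mem_setOf_eq, Set.mem_image, MDs]
      constructor
      · rintro ⟨hp, hl, v, rfl⟩
        refine ⟨v, ⟨(preC_shortWord_append m _ v).1 hp, ?_⟩, rfl⟩
        simp only [List.length_append, shortWord, List.length_replicate,
          List.length_cons, List.length_nil] at hl
        omega
      · rintro ⟨v, ⟨hv, hl⟩, rfl⟩
        refine ⟨(preC_shortWord_append m _ v).2 hv, ?_, ⟨v, rfl⟩⟩
        simp only [List.length_append, shortWord, List.length_replicate,
          List.length_cons, List.length_nil]
        omega
    have hinj : Function.Injective fun v : List Bool => shortWord (m j) ++ v :=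
      fun x y h => List.append_cancel_left h
    rw [hset, Set.ncard_image_of_injective _ hinj, fD_eq]
  · have h0 : k - m j - 1 = 0 := by omega
    have hempty : Qs m j k = ∅ := by
      ext w
      simp only [Qs, Set.mem_setOf_eq, Set.mem_empty_iff_false, iff_false]
      rintro ⟨hp, hl, v, rfl⟩
      simp only [List.length_append, shortWord, List.length_replicate,
        List.length_cons, List.length_nil] at hl
      omega
    rw [hempty, h0, fD_zero, Set.ncard_empty]

lemma finite_setBiUnion {ι α : Type*} (s : Finset ι) (A : ι → Set α)
    (hf : ∀ i ∈ s, (A i).Finite) : (⋃ i ∈ s, A i).Finite := by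
  classical
  induction s using Finset.induction with
  | empty => simp
  | @insert a s ha ih =>
    rw [Finset.set_biUnion_insert]
    exact (hf a (Finset.mem_insert_self a s)).union
      (ih fun i hi => hf i (Finset.mem_insert_of_mem hi))

/-- ncard of a pairwise disjoint finite union over a Finset. -/
lemma ncard_biUnion {ι α : Type*} (s : Finset ι) (A : ι → Set α)
    (hf : ∀ i ∈ s, (A i).Finite)
    (hd : ∀ i ∈ s, ∀ j ∈ s, i ≠ j → Disjoint (A i) (A j)) :
    (⋃ i ∈ s, A i).ncard = ∑ i ∈ s, (A i).ncard := by
  classical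
  induction s using Finset.induction with
  | empty => simp
  | @insert a s ha ih =>
    rw [Finset.sum_insert ha, Finset.set_biUnion_insert]
    rw [Set.ncard_union_eq ?_ (hf a (Finset.mem_insert_self a s)) ?_]
    · rw [ih (fun i hi => hf i (Finset.mem_insert_of_mem hi))
        (fun i hi j hj hij => hd i (Finset.mem_insert_of_mem hi) j
          (Finset.mem_insert_of_mem hj) hij)]
    · simp only [Set.disjoint_iUnion_right]
      intro i hi
      exact hd a (Finset.mem_insert_self a s) i (Finset.mem_insert_of_mem hi)
        (fun h => ha (h ▸ hi))
    · exact finite_setBiUnion s A (fun i hi => hf i (Finset.mem_insert_of_mem hi))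

/-- L3 : `p k = g k + ∑ j, f (k - m j - 1)`. -/
lemma L3 (hm : Function.Injective m) (k : ℕ) : pD m k = gD m k + ∑ j : Fin t, fD m (k - m j - 1) := by
  classical
  have hset : Ps m k = Gs m k ∪ ⋃ j ∈ (Finset.univ : Finset (Fin t)), Qs m j k := by
    ext w
    simp only [Ps, Set.mem_setOf_eq, Set.mem_union, Set.mem_iUnion, Gs, Qs,
      Finset.mem_univ, exists_true_left, exists_prop, true_and]
    constructor
    · rintro ⟨hp, hl⟩
      by_cases hs : ∃ j, shortWord (m j) <+: w
      · obtain ⟨j, hj⟩ := hs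
        exact Or.inr ⟨j, hp, hl, hj⟩
      · push_neg at hs
        exact Or.inl ⟨⟨hs, hp⟩, hl⟩
    · rintro (⟨⟨-, hp⟩, hl⟩ | ⟨j, hp, hl, -⟩)
      · exact ⟨hp, hl⟩
      · exact ⟨hp, hl⟩
  have hdisjG : Disjoint (Gs m k) (⋃ j ∈ (Finset.univ : Finset (Fin t)), Qs m j k) := by
    simp only [Set.disjoint_iUnion_right]
    intro j hj
    rw [Set.disjoint_left]
    rintro w ⟨hlg, -⟩ ⟨-, -, hpre⟩
    exact hlg.1 j hpre
  have hcard : (⋃ j ∈ (Finset.univ : Finset (Fin t)), Qs m j k).ncard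
      = ∑ j : Fin t, fD m (k - m j - 1) := by
    have hdisjQ : ∀ i ∈ (Finset.univ : Finset (Fin t)), ∀ j ∈ (Finset.univ : Finset (Fin t)),
        i ≠ j → Disjoint (Qs m i k) (Qs m j k) := by
      intro i _ j _ hij
      rw [Set.disjoint_left]
      rintro w ⟨-, -, hi⟩ ⟨-, -, hj⟩
      exact hij (hm (shortWord_prefix_unique hi hj))
    rw [ncard_biUnion _ _ (fun j _ => Qs_finite m j k) hdisjQ]
    exact Finset.sum_congr rfl fun j _ => Qs_ncard m j k
  rw [pD, hset, Set.ncard_union_eq hdisjG (Gs_finite m k)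
    (finite_setBiUnion Finset.univ _ (fun j _ => Qs_finite m j k)),
    hcard, gD]

end Counting

theorem multiDelim_count_recurrence' {t : ℕ} (ht : 0 < t) (m : Fin t → ℕ)
    (hpos : ∀ i, 0 < m i) (hmono : StrictMono m) (n : ℕ) (hn : 2 ≤ n) :
    (fD m n : ℤ) = (TD m n : ℤ) - TD m (n - 1) + fD m (n - 1) + 2 * fD m (n - 2)
      - ∑ i : Fin t, (fD m (n - m i - 1) : ℤ)
      + ∑ i : Fin t, (fD m (n - m i - 3) : ℤ) := by
  classical
  have hm : Function.Injective m := hmono.injective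
  obtain ⟨a, rfl⟩ : ∃ a, n = a + 2 := ⟨n - 2, by omega⟩
  have hn1 : a + 2 - 1 = a + 1 := by omega
  have hn2 : a + 2 - 2 = a := by omega
  rw [hn1, hn2]
  -- TD rewrites
  have hTD : ∀ k, TD m (k + 1) = sD m (k + 1) + sD m k := by
    intro k
    rw [TD, sD, sD]
    congr 1
    apply Finset.card_bij (fun i _ => i)
    · intro i hi
      simp only [Finset.mem_filter, Finset.mem_univ, true_and] at hi ⊢
      omega
    · intro i _ j _ h; exact h
    · intro i hi
      simp only [Finset.mem_filter, Finset.mem_univ, true_and] at hi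
      exact ⟨i, by simp only [Finset.mem_filter, Finset.mem_univ, true_and]; omega, rfl⟩
  -- index rewrite in the last sum
  have hsum3 : ∑ i : Fin t, (fD m (a + 2 - m i - 3) : ℤ)
      = ∑ i : Fin t, (fD m (a - m i - 1) : ℤ) := by
    refine Finset.sum_congr rfl fun i _ => ?_
    congr 2
    omega
  rw [hsum3]
  have hL1 := fun k => L1 m hm k
  have hL2 := fun k => L2 m k
  have hL3 := fun k => L3 m hm k
  -- cast to ℤ
  have c1 : ∀ k, (fD m k : ℤ) = gD m k + sD m k := fun k => by
    rw [hL1 k]; push_cast; ring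
  have c2 : ∀ k, (pD m (k + 1) : ℤ) = fD m k + pD m k := fun k => by
    rw [hL2 k]; push_cast; ring
  have c3 : ∀ k, (pD m k : ℤ) = gD m k + ∑ j : Fin t, (fD m (k - m j - 1) : ℤ) :=
    fun k => by rw [hL3 k]; push_cast; ring
  have e3a : (pD m (a + 2) : ℤ)
      = gD m (a + 2) + ∑ j : Fin t, (fD m (a + 2 - m j - 1) : ℤ) := c3 (a + 2)
  have e3c : (pD m a : ℤ) = gD m a + ∑ j : Fin t, (fD m (a - m j - 1) : ℤ) := c3 a
  have e2a : (pD m (a + 2) : ℤ) = fD m (a + 1) + pD m (a + 1) := c2 (a + 1)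
  have e2b : (pD m (a + 1) : ℤ) = fD m a + pD m a := c2 a
  have e1a : (fD m (a + 2) : ℤ) = gD m (a + 2) + sD m (a + 2) := c1 (a + 2)
  have e1c : (fD m a : ℤ) = gD m a + sD m a := c1 a
  have hT2 : (TD m (a + 2) : ℤ) = sD m (a + 2) + sD m (a + 1) := by
    rw [hTD (a + 1)]; push_cast; ring
  have hT1 : (TD m (a + 1) : ℤ) = sD m (a + 1) + sD m a := by
    rw [hTD a]; push_cast; ring
  rw [hT2, hT1]
  linarith [e3a, e3c, e2a, e2b, e1a, e1c]
end

section
/- (Theorem 4.) Every multi-delimiter code D_{m_1,…,m_t} is universal: there exist a bijection a : ℕ_{≥1} → D_{m_1,…,m_t} whose codeword lengths are nondecreasing (i ≤ j implies |a(i)| ≤ |a(j)|) and a constant K > 0 such that, for every n ≥ 1 and every probability vector p_1 ≥ p_2 ≥ … ≥ p_n ≥ 0 with ∑_{i=1}^n p_i = 1, one has ∑_{i=1}^n |a(i)|·p_i ≤ K · max(1, H(P)), where H(P) = −∑_{i=1}^n p_i log₂ p_i (with the convention 0·log₂ 0 = 0). -/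
def binVal : List Bool → ℕ
  | [] => 1
  | b :: l => Nat.bit b (binVal l)

theorem two_pow_length_le_binVal : ∀ w : List Bool, 2 ^ w.length ≤ binVal w
  | [] => le_rfl
  | b :: l => by
    have := two_pow_length_le_binVal l
    rw [binVal, Nat.bit_val, List.length_cons, pow_succ]
    omega

theorem binVal_lt_two_pow_length_succ : ∀ w : List Bool, binVal w < 2 ^ (w.length + 1)
  | [] => by decide
  | b :: l => by
    have := binVal_lt_two_pow_length_succ l
    rw [binVal, Nat.bit_val, List.length_cons, pow_succ]
    cases b <;> simp only [Bool.toNat_false, Bool.toNat_true] <;> omega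

theorem binVal_injective : Function.Injective binVal
  | [], [], _ => rfl
  | [], b :: l, h | b :: l, [], h => by
    have := two_pow_length_le_binVal l
    have := Nat.one_le_two_pow (n := l.length)
    simp only [binVal, Nat.bit_val] at h
    omega
  | b :: l, c :: l', h => by
    simp only [binVal] at h
    have hl := congrArg (· / 2) h
    have hb := congrArg (· % 2) h
    simp only [Nat.bit_div_two, Nat.bit_mod_two] at hl hb
    rw [binVal_injective hl]
    cases b <;> cases c <;> simp_all

theorem length_le_length_of_binVal_le {w w' : List Bool} (h : binVal w ≤ binVal w') :
    w.length ≤ w'.length := by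
  have := (two_pow_length_le_binVal w).trans_lt
    (h.trans_lt (binVal_lt_two_pow_length_succ w'))
  have := (Nat.pow_lt_pow_iff_right one_lt_two).mp this
  omega

theorem exists_bijective_monotone_length {C : Set (List Bool)} (hC : C.Infinite) :
    ∃ e : ℕ → C, Function.Bijective e ∧ Monotone fun j => (e j : List Bool).length := by
  have hinf : (binVal '' C).Infinite := hC.image binVal_injective.injOn
  have hmem (j : ℕ) : ∃ w ∈ C, binVal w = Nat.nth (· ∈ binVal '' C) j :=
    Nat.nth_mem_of_infinite hinf j
  choose e heC he using hmem
  refine ⟨fun j => ⟨e j, heC j⟩, ⟨fun i j hij => ?_, fun w => ?_⟩, fun i j hij => ?_⟩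
  · have := congrArg (binVal ∘ Subtype.val) hij
    simp only [Function.comp, he] at this
    exact Nat.nth_injective hinf this
  · have hrange : Set.range (Nat.nth (· ∈ binVal '' C)) = binVal '' C :=
      Nat.range_nth_of_infinite hinf
    obtain ⟨j, hj⟩ := hrange ▸ Set.mem_image_of_mem binVal w.2
    exact ⟨j, Subtype.ext (binVal_injective ((he j).trans hj))⟩
  · apply length_le_length_of_binVal_le
    rw [he, he]
    exact Nat.nth_monotone hinf hij

theorem le_of_lt_card_of_subset_range {α : Type*} {f : α → ℕ} {e : ℕ → α}
    (he : Monotone (f ∘ e)) {S : Finset α} (hS : ↑S ⊆ Set.range e) {ℓ : ℕ}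
    (hSℓ : ∀ x ∈ S, f x ≤ ℓ) {j : ℕ} (hj : j < S.card) : f (e j) ≤ ℓ := by
  classical
  by_contra! hℓ
  have : S ⊆ (Finset.range j).image e := by
    intro x hx
    obtain ⟨k, rfl⟩ := hS hx
    refine Finset.mem_image_of_mem e (Finset.mem_range.mpr ?_)
    by_contra! hk
    exact (hℓ.trans_le (he hk)).not_ge (hSℓ _ hx)
  have := (Finset.card_le_card this).trans Finset.card_image_le
  rw [Finset.card_range] at this
  omega

theorem exists_bijective_length_le_logb {C : Set (List Bool)} {g : List Bool → List Bool}
    (hg : Function.Injective g) (hgC : ∀ w, g w ∈ C) {c d : ℕ}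
    (hlen : ∀ w, (g w).length ≤ c * w.length + d) :
    ∃ e : ℕ → C, Function.Bijective e ∧ (Monotone fun j => (e j : List Bool).length) ∧
      ∀ j : ℕ, ((e j : List Bool).length : ℝ) ≤ c * Real.logb 2 (j + 1) + (c + d) := by
  classical
  obtain ⟨e, he, hmono⟩ :=
    exists_bijective_monotone_length (Set.infinite_of_injective_forall_mem hg hgC)
  refine ⟨e, he, hmono, fun j => ?_⟩
  set L := Nat.log 2 (j + 1) + 1
  let S : Finset C := Finset.univ.image fun x : Fin L → Bool => ⟨g (List.ofFn x), hgC _⟩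
  have hS : S.card = 2 ^ L := by
    rw [Finset.card_image_of_injective, Finset.card_univ, Fintype.card_fun, Fintype.card_bool,
      Fintype.card_fin]
    intro x y hxy
    exact List.ofFn_injective (hg (congrArg Subtype.val hxy))
  have hj : j < S.card := hS ▸ (Nat.lt_succ_self j).trans (Nat.lt_pow_succ_log_self one_lt_two _)
  have hSlen : ∀ w ∈ S, (w : List Bool).length ≤ c * L + d := by
    simp only [S, Finset.forall_mem_image]
    exact fun x _ => (hlen _).trans_eq (by rw [List.length_ofFn])
  have hlenj : (e j : List Bool).length ≤ c * L + d :=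
    le_of_lt_card_of_subset_range (f := fun w : C => (w : List Bool).length) hmono
      (fun w _ => he.2 w) hSlen hj
  have hlog : (Nat.log 2 (j + 1) : ℝ) ≤ Real.logb 2 (j + 1) := by
    exact_mod_cast Real.natLog_le_logb (j + 1) 2
  calc ((e j : List Bool).length : ℝ) ≤ c * L + d := by exact_mod_cast hlenj
    _ ≤ c * Real.logb 2 (j + 1) + (c + d) := by
      push_cast [L]
      nlinarith [hlog]

theorem add_one_mul_le_one_of_antitone {n : ℕ} {p : Fin n → ℝ} (hp0 : ∀ i, 0 ≤ p i)
    (hanti : Antitone p) (hsum : ∑ i : Fin n, p i ≤ 1) (i : Fin n) :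
    (((i : ℕ) : ℝ) + 1) * p i ≤ 1 :=
  calc (((i : ℕ) : ℝ) + 1) * p i = ∑ _j ∈ Finset.Iic i, p i := by simp [Finset.sum_const]
    _ ≤ ∑ j ∈ Finset.Iic i, p j := Finset.sum_le_sum fun j hj => hanti (Finset.mem_Iic.mp hj)
    _ ≤ ∑ j, p j := Finset.sum_le_sum_of_subset_of_nonneg (Finset.subset_univ _)
        fun j _ _ => hp0 j
    _ ≤ 1 := hsum

theorem sum_mul_logb_add_one_le_entropy {n : ℕ} {p : Fin n → ℝ} (hp0 : ∀ i, 0 ≤ p i)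
    (hanti : Antitone p) (hsum : ∑ i : Fin n, p i ≤ 1) :
    ∑ i : Fin n, p i * Real.logb 2 ((i : ℕ) + 1) ≤
      -∑ i : Fin n, p i * Real.logb 2 (p i) := by
  rw [← Finset.sum_neg_distrib]
  refine Finset.sum_le_sum fun i _ => ?_
  rcases (hp0 i).eq_or_lt with h0 | h0
  · simp [← h0]
  have : Real.logb 2 ((i : ℕ) + 1) ≤ -Real.logb 2 (p i) := by
    rw [← Real.logb_inv]
    refine Real.logb_le_logb_of_le one_lt_two (by positivity) ?_
    rw [← one_div, le_div_iff₀ h0]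
    exact add_one_mul_le_one_of_antitone hp0 hanti hsum i
  nlinarith

theorem sum_mul_le_mul_max_entropy {n : ℕ} {p ℓ : Fin n → ℝ} {c d : ℝ} (hc : 0 ≤ c)
    (hd : 0 ≤ d) (hℓ : ∀ i, ℓ i ≤ c * Real.logb 2 ((i : ℕ) + 1) + d)
    (hp0 : ∀ i, 0 ≤ p i) (hanti : Antitone p) (hsum : ∑ i : Fin n, p i = 1) :
    ∑ i : Fin n, ℓ i * p i ≤ (c + d) * max 1 (-∑ i : Fin n, p i * Real.logb 2 (p i)) := by
  set H := -∑ i : Fin n, p i * Real.logb 2 (p i)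
  have hH : ∑ i : Fin n, p i * Real.logb 2 ((i : ℕ) + 1) ≤ H :=
    sum_mul_logb_add_one_le_entropy hp0 hanti hsum.le
  calc ∑ i : Fin n, ℓ i * p i ≤ ∑ i : Fin n, (c * Real.logb 2 ((i : ℕ) + 1) + d) * p i :=
        Finset.sum_le_sum fun i _ => mul_le_mul_of_nonneg_right (hℓ i) (hp0 i)
    _ = c * ∑ i : Fin n, p i * Real.logb 2 ((i : ℕ) + 1) + d * ∑ i : Fin n, p i := by
        simp only [Finset.mul_sum, ← Finset.sum_add_distrib]
        exact Finset.sum_congr rfl fun i _ => by ring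
    _ ≤ c * max 1 H + d * max 1 H := by
        rw [hsum]
        gcongr
        · exact hH.trans (le_max_right 1 H)
        · exact le_max_left 1 H
    _ = (c + d) * max 1 H := by ring

def runWord : List ℕ → List Bool
  | [] => []
  | a :: r => List.replicate a true ++ false :: runWord r

theorem runWord_append (r s : List ℕ) : runWord (r ++ s) = runWord r ++ runWord s := by
  induction r with
  | nil => rfl
  | cons a r ih => simp [runWord, ih]

theorem length_runWord : ∀ r : List ℕ, (runWord r).length = r.sum + r.length
  | [] => rfl
  | a :: r => by simp [runWord, length_runWord r]; omega

theorem replicate_append_false_eq_append_false {a : ℕ} {u v w : List Bool}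
    (h : List.replicate a true ++ false :: w = u ++ false :: v) :
    (u = List.replicate a true ∧ v = w) ∨
      ∃ u', u = List.replicate a true ++ false :: u' ∧ w = u' ++ false :: v := by
  rcases List.append_eq_append_iff.mp h with ⟨a', rfl, h'⟩ | ⟨c', hc', h'⟩
  · rcases a' with _ | ⟨x, a'⟩
    · simp_all
    · simp only [List.cons_append, List.cons.injEq] at h'
      exact Or.inr ⟨a', by rw [← h'.1], h'.2⟩
  · rcases c' with _ | ⟨x, c'⟩
    · simp_all
    · have hx : x ∈ List.replicate a true := hc' ▸ by simp
      simp only [List.cons_append, List.cons.injEq] at h'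
      simp [← h'.1] at hx

theorem replicate_append_false_inj {k c : ℕ} {v w : List Bool}
    (h : List.replicate k true ++ false :: v = List.replicate c true ++ false :: w) :
    k = c ∧ v = w := by
  rcases replicate_append_false_eq_append_false h with ⟨hc, hw⟩ | ⟨u', hu', -⟩
  · exact ⟨by simpa using (congrArg List.length hc).symm, hw.symm⟩
  · have : false ∈ List.replicate c true := hu' ▸ by simp
    simp at this

theorem runWord_eq_replicate_append_cons {r : List ℕ} {k : ℕ} {v : List Bool}
    (h : runWord r = List.replicate k true ++ false :: v) :
    ∃ r', r = k :: r' ∧ v = runWord r' := by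
  rcases r with _ | ⟨a, r'⟩
  · simp [runWord] at h
  · obtain ⟨rfl, rfl⟩ := replicate_append_false_inj h
    exact ⟨r', rfl, rfl⟩

theorem runWord_eq_append_delim : ∀ {r : List ℕ} {u : List Bool} {k : ℕ} {v : List Bool},
    runWord r = u ++ false :: (List.replicate k true ++ false :: v) →
    ∃ r₁ r₂, r = r₁ ++ k :: r₂ ∧ v = runWord r₂
  | [], _, _, _, h => by simp [runWord] at h
  | a :: r, u, k, v, h => by
    rcases replicate_append_false_eq_append_false h with ⟨-, h'⟩ | ⟨u', -, h'⟩
    · obtain ⟨r₂, rfl, rfl⟩ := runWord_eq_replicate_append_cons h'.symm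
      exact ⟨[a], r₂, rfl, rfl⟩
    · obtain ⟨r₁, r₂, rfl, rfl⟩ := runWord_eq_append_delim h'
      exact ⟨a :: r₁, r₂, rfl, rfl⟩

theorem runWord_injective : Function.Injective runWord
  | [], [], _ => rfl
  | [], _ :: _, h | _ :: _, [], h => by simp [runWord] at h
  | _ :: _, _ :: _, h => by
    obtain ⟨rfl, h'⟩ := replicate_append_false_inj h
    rw [runWord_injective h']

theorem List.mem_of_append_singleton_eq_append_cons {α : Type*} {l r₁ r₂ : List α} {x k : α}
    (h : l ++ [x] = r₁ ++ k :: r₂) (hr₂ : r₂ ≠ []) : k ∈ l := by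
  obtain ⟨r₂, y, rfl⟩ := (List.eq_nil_or_concat' r₂).resolve_left hr₂
  rw [← List.cons_append, ← List.append_assoc] at h
  simp [(List.append_inj' h rfl).1]

def runOfBit (M : ℕ) (b : Bool) : ℕ := if b then M + 1 else 0

theorem runOfBit_eq_zero_or_eq (M : ℕ) (b : Bool) :
    runOfBit M b = 0 ∨ runOfBit M b = M + 1 := by
  cases b <;> simp [runOfBit]

theorem runOfBit_injective (M : ℕ) : Function.Injective (runOfBit M) := by
  intro a b
  cases a <;> cases b <;> simp [runOfBit]

def delimCodeword (M m₀ : ℕ) (bs : List Bool) : List Bool :=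
  runWord (bs.map (runOfBit M) ++ [0, m₀])

theorem delimCodeword_injective (M m₀ : ℕ) : Function.Injective (delimCodeword M m₀) := by
  intro bs bs' h
  exact List.map_injective_iff.mpr (runOfBit_injective M)
    (List.append_cancel_right (runWord_injective h))

theorem length_delimCodeword_le (M m₀ : ℕ) (bs : List Bool) :
    (delimCodeword M m₀ bs).length ≤ (M + 2) * bs.length + (m₀ + 2) := by
  have hsum : (bs.map (runOfBit M)).sum ≤ bs.length * (M + 1) := by
    have hrun (b : Bool) : runOfBit M b ≤ M + 1 := by
      rcases runOfBit_eq_zero_or_eq M b with h | h <;> omega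
    simpa using List.sum_le_card_nsmul (bs.map (runOfBit M)) (M + 1)
      (List.forall_mem_map.mpr fun b _ => hrun b)
  simp only [delimCodeword, length_runWord, List.sum_append, List.length_append,
    List.length_map, List.sum_cons, List.sum_nil, List.length_cons, List.length_nil]
  nlinarith

theorem delimCodeword_mem {t : ℕ} {m : Fin t → ℕ} (hpos : ∀ i, 0 < m i) {M : ℕ}
    (hM : ∀ i, m i ≤ M) (i₀ : Fin t) (bs : List Bool) :
    delimCodeword M (m i₀) bs ∈ MultiDelim m := by
  set rs := bs.map (runOfBit M) ++ [0]
  have hrs (i : Fin t) : m i ∉ rs := by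
    have := hpos i
    have := hM i
    simp only [rs, List.mem_append, List.mem_map, List.mem_singleton]
    rintro (⟨b, -, hb⟩ | hb)
    · rcases runOfBit_eq_zero_or_eq M b with h | h <;> omega
    · omega
  have hw : delimCodeword M (m i₀) bs = runWord (rs ++ [m i₀]) := by simp [delimCodeword, rs]
  refine Or.inr ⟨fun i ⟨x, hx⟩ => ?_, ⟨i₀, ?_⟩, fun i u v huv => ?_⟩
  · obtain ⟨r, hr, -⟩ := runWord_eq_replicate_append_cons (k := m i) (v := x)
      (by rw [← hw, ← hx, shortWord, List.append_assoc, List.singleton_append])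
    refine hrs i (List.mem_of_append_singleton_eq_append_cons (r₁ := []) hr ?_)
    rintro rfl
    simpa [rs] using congrArg List.length hr
  · refine ⟨runWord (bs.map (runOfBit M)), ?_⟩
    simp [delimCodeword, runWord_append, runWord, delim]
  · obtain ⟨r₁, r₂, hr, rfl⟩ := runWord_eq_append_delim (u := u) (k := m i) (v := v)
      (by rw [← hw, huv]; simp [delim])
    suffices r₂ = [] by rw [this, runWord]
    by_contra hr₂
    exact hrs i (List.mem_of_append_singleton_eq_append_cons hr hr₂)

theorem multiDelim_universal_general {t : ℕ} (ht : 0 < t) (m : Fin t → ℕ)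
    (hpos : ∀ i, 0 < m i) :
    ∃ (a : {i : ℕ // 0 < i} → MultiDelim m) (K : ℝ),
      Function.Bijective a ∧
      (∀ i j : {i : ℕ // 0 < i}, i ≤ j →
        (a i : List Bool).length ≤ (a j : List Bool).length) ∧
      0 < K ∧
      (∀ (n : ℕ), 1 ≤ n → ∀ p : Fin n → ℝ,
        (∀ i, 0 ≤ p i) → (∀ i j : Fin n, i ≤ j → p j ≤ p i) →
        (∑ i, p i = 1) →
        ∑ i : Fin n, ((a ⟨i.1 + 1, Nat.succ_pos _⟩ : List Bool).length : ℝ) * p i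
          ≤ K * max 1 (-∑ i : Fin n, p i * Real.logb 2 (p i))) := by
  set M := Finset.univ.sup m
  set m₀ := m ⟨0, ht⟩
  obtain ⟨e, he, hmono, hlen⟩ := exists_bijective_length_le_logb
    (delimCodeword_injective M m₀)
    (delimCodeword_mem hpos (fun i => Finset.le_sup (Finset.mem_univ i)) ⟨0, ht⟩)
    (length_delimCodeword_le M m₀)
  refine ⟨e ∘ Equiv.pnatEquivNat, (M + 2 : ℕ) + ((M + 2 : ℕ) + (m₀ + 2 : ℕ)),
    he.comp Equiv.pnatEquivNat.bijective, fun i j hij => hmono (Nat.sub_le_sub_right hij 1),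
    by positivity, fun n _ p hp0 hanti hsum => ?_⟩
  exact sum_mul_le_mul_max_entropy (by positivity) (by positivity) (fun i => hlen i) hp0 hanti
    hsum

/-- Theorem 4: every multi-delimiter code `D_{m_1,…,m_t}` is
universal: there exist a bijection `a : ℕ_{≥1} → D_{m_1,…,m_t}` with nondecreasing
codeword lengths and a constant `K > 0` such that for every `n ≥ 1` and every
nonincreasing probability vector `p_1 ≥ … ≥ p_n ≥ 0` summing to `1`,
`∑ |a(i)| p_i ≤ K · max(1, -∑ p_i log₂ p_i)`. -/
theorem multiDelim_universal {t : ℕ} (ht : 0 < t) (m : Fin t → ℕ)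
    (hpos : ∀ i, 0 < m i) (hmono : StrictMono m) :
    ∃ (a : {i : ℕ // 0 < i} → MultiDelim m) (K : ℝ),
      Function.Bijective a ∧
      (∀ i j : {i : ℕ // 0 < i}, i ≤ j →
        (a i : List Bool).length ≤ (a j : List Bool).length) ∧
      0 < K ∧
      (∀ (n : ℕ), 1 ≤ n → ∀ p : Fin n → ℝ,
        (∀ i, 0 ≤ p i) → (∀ i j : Fin n, i ≤ j → p j ≤ p i) →
        (∑ i, p i = 1) →
        ∑ i : Fin n, ((a ⟨i.1 + 1, Nat.succ_pos _⟩ : List Bool).length : ℝ) * p i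
          ≤ K * max 1 (-∑ i : Fin n, p i * Real.logb 2 (p i))) :=
  multiDelim_universal_general ht m hpos
end

section
/- (Lemma of Apostolico–Fraenkel used in the proof of Theorem 4.) Let l : ℕ_{≥1} → ℕ and let c_1, c_2 be real constants with c_2 > 0 such that l(k) ≤ c_1 + c_2·log₂ k for every k ≥ 1. Then there exists a constant K > 0 such that for every n ≥ 1 and every sequence of reals p_1 ≥ p_2 ≥ … ≥ p_n ≥ 0 with ∑_{i=1}^n p_i ≤ 1, one has ∑_{i=1}^n l(i)·p_i ≤ K · max(1, −∑_{i=1}^n p_i log₂ p_i), with the convention 0·log₂ 0 = 0. -/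
/-- Apostolico–Fraenkel lemma: if `l : ℕ_{≥1} → ℕ` satisfies
`l k ≤ c₁ + c₂ log₂ k` for all `k ≥ 1` (with `c₂ > 0`), then there is a constant
`K > 0` such that for every `n ≥ 1` and every nonincreasing sequence
`p_1 ≥ … ≥ p_n ≥ 0` with `∑ p_i ≤ 1`, one has
`∑ l(i) p_i ≤ K · max(1, -∑ p_i log₂ p_i)`. -/
theorem apostolico_fraenkel (l : ℕ → ℕ) (c₁ c₂ : ℝ) (hc₂ : 0 < c₂)
    (hl : ∀ k : ℕ, 1 ≤ k → (l k : ℝ) ≤ c₁ + c₂ * Real.logb 2 k) :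
    ∃ K : ℝ, 0 < K ∧
      ∀ (n : ℕ), 1 ≤ n → ∀ p : Fin n → ℝ,
        (∀ i, 0 ≤ p i) → (∀ i j : Fin n, i ≤ j → p j ≤ p i) →
        (∑ i, p i ≤ 1) →
        ∑ i : Fin n, (l (i.1 + 1) : ℝ) * p i
          ≤ K * max 1 (-∑ i : Fin n, p i * Real.logb 2 (p i)) := by
  refine ⟨|c₁| + c₂ + 1, by positivity, ?_⟩
  intro n hn p hp hmono hsum
  -- key bound: (i+1) * p i ≤ 1
  have hkey : ∀ i : Fin n, (i.1 + 1 : ℝ) * p i ≤ 1 := by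
    intro i
    have h1 : (i.1 + 1 : ℝ) * p i = ∑ _j ∈ Finset.Iic i, p i := by
      rw [Finset.sum_const, Fin.card_Iic]
      push_cast
      ring
    have h2 : ∑ _j ∈ Finset.Iic i, p i ≤ ∑ j ∈ Finset.Iic i, p j :=
      Finset.sum_le_sum fun j hj => hmono j i (Finset.mem_Iic.mp hj)
    have h3 : ∑ j ∈ Finset.Iic i, p j ≤ ∑ j, p j :=
      Finset.sum_le_sum_of_subset_of_nonneg (Finset.subset_univ _)
        (fun j _ _ => hp j)
    linarith
  have hp1 : ∀ i : Fin n, p i ≤ 1 := by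
    intro i
    have : p i ≤ (i.1 + 1 : ℝ) * p i := by
      nlinarith [hp i, (Nat.cast_nonneg i.1 : (0:ℝ) ≤ i.1)]
    linarith [hkey i]
  -- termwise entropy bound
  have hterm : ∀ i : Fin n, (l (i.1 + 1) : ℝ) * p i
      ≤ c₁ * p i + c₂ * (-(p i * Real.logb 2 (p i))) := by
    intro i
    have hL : Real.logb 2 (i.1 + 1) * p i ≤ -(p i * Real.logb 2 (p i)) := by
      rcases eq_or_lt_of_le (hp i) with h0 | h0
      · simp [← h0]
      · have hinv : (i.1 + 1 : ℝ) ≤ (p i)⁻¹ := by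
          nlinarith [mul_inv_cancel₀ h0.ne', hkey i, inv_pos.mpr h0]
        have hlog : Real.logb 2 (i.1 + 1) ≤ Real.logb 2 (p i)⁻¹ :=
          Real.logb_le_logb_of_le (by norm_num) (by positivity) hinv
        rw [Real.logb_inv] at hlog
        nlinarith
    have hmul : (l (i.1 + 1) : ℝ) * p i
        ≤ (c₁ + c₂ * Real.logb 2 (i.1 + 1)) * p i := by
      have := hl (i.1 + 1) (Nat.le_add_left 1 i.1)
      have hpn := hp i
      push_cast at this ⊢
      nlinarith
    nlinarith [hL, hc₂.le]
  have hS0 : 0 ≤ ∑ i, p i := Finset.sum_nonneg fun i _ => hp i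
  have hsumle : ∑ i : Fin n, (l (i.1 + 1) : ℝ) * p i
      ≤ c₁ * (∑ i, p i) + c₂ * (-∑ i : Fin n, p i * Real.logb 2 (p i)) := by
    calc ∑ i : Fin n, (l (i.1 + 1) : ℝ) * p i
        ≤ ∑ i : Fin n, (c₁ * p i + c₂ * (-(p i * Real.logb 2 (p i)))) :=
          Finset.sum_le_sum fun i _ => hterm i
      _ = c₁ * (∑ i, p i) + c₂ * (-∑ i : Fin n, p i * Real.logb 2 (p i)) := by
          rw [Finset.sum_add_distrib, ← Finset.mul_sum, ← Finset.mul_sum,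
            ← Finset.sum_neg_distrib]
  set H := -∑ i : Fin n, p i * Real.logb 2 (p i) with hH
  have hH0 : 0 ≤ H := by
    rw [hH, ← Finset.sum_neg_distrib]
    refine Finset.sum_nonneg fun i _ => ?_
    rcases eq_or_lt_of_le (hp i) with h0 | h0
    · simp [← h0]
    · have : Real.logb 2 (p i) ≤ 0 := Real.logb_nonpos (by norm_num) (hp i) (hp1 i)
      nlinarith
  have hmax : max 1 H ≥ 1 := le_max_left _ _
  have hmaxH : H ≤ max 1 H := le_max_right _ _
  have hc1S : c₁ * (∑ i, p i) ≤ |c₁| := by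
    have := abs_nonneg c₁
    rcases le_or_gt c₁ 0 with h | h
    · nlinarith
    · rw [abs_of_pos h]; nlinarith
  calc ∑ i : Fin n, (l (i.1 + 1) : ℝ) * p i
      ≤ c₁ * (∑ i, p i) + c₂ * H := hsumle
    _ ≤ |c₁| + c₂ * H := by linarith
    _ ≤ |c₁| * max 1 H + c₂ * max 1 H := by
        have := abs_nonneg c₁
        nlinarith
    _ ≤ (|c₁| + c₂ + 1) * max 1 H := by nlinarith
end

section
/- (Lemma 2.) Let f_n be the number of codewords of length n in the code D_2. Then for every n ≥ 7, f_n = f_{n−1} + f_{n−2} + f_{n−3} + f_{n−6}. -/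
/-- The code `D₂`: the word `110` together with all binary words that do not begin
with `110`, end with the suffix `0110`, and contain `0110` only as that suffix. -/
def D2 : Set (List Bool) :=
  {w | w = [true, true, false] ∨
    (¬ [true, true, false] <+: w ∧
     [false, true, true, false] <:+ w ∧
     ∀ u v, w = u ++ [false, true, true, false] ++ v → v = [])}

/-- `f2 n` is the number of codewords of `D₂` of length `n`. -/
noncomputable def f2 (n : ℕ) : ℕ := Set.ncard {w ∈ D2 | w.length = n}

/-- Words ending in `0110` with `0110` occurring only as that suffix. -/
def G2 (m : ℕ) : Set (List Bool) :=
  {y | [false, true, true, false] <:+ y ∧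
    (∀ u v, y = u ++ [false, true, true, false] ++ v → v = []) ∧ y.length = m}

lemma suffix_of_suffix_cons {a : Bool} {z l : List Bool}
    (h : l <:+ a :: z) (hl : l.length ≤ z.length) : l <:+ z := by
  obtain ⟨u, hu⟩ := h
  cases u with
  | nil =>
    simp only [List.nil_append] at hu
    have := congrArg List.length hu
    simp at this
    omega
  | cons b u =>
    refine ⟨u, ?_⟩
    simpa using congrArg List.tail hu

lemma suffix_of_suffix_append {p z l : List Bool}
    (h : l <:+ p ++ z) (hl : l.length ≤ z.length) : l <:+ z := by
  induction p with
  | nil => simpa using h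
  | cons a p ih =>
    exact ih (suffix_of_suffix_cons (z := p ++ z) h (by simp; omega))

lemma S_eq (n : ℕ) (hn : 7 ≤ n) :
    {w ∈ D2 | w.length = n} =
      ((false :: ·) '' {w ∈ D2 | w.length = n - 1}) ∪
      ((true :: false :: ·) '' {w ∈ D2 | w.length = n - 2}) ∪
      ((true :: true :: true :: ·) '' G2 (n - 3)) := by
  ext w
  constructor
  · rintro ⟨hw, hl⟩
    rcases hw with rfl | ⟨hp, hs, ho⟩
    · simp at hl; omega
    · obtain ⟨a, b, c, t, rfl⟩ : ∃ a b c t, w = a :: b :: c :: t := by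
        rcases w with _ | ⟨a, _ | ⟨b, _ | ⟨c, t⟩⟩⟩ <;> simp at hl <;> try omega
        exact ⟨a, b, c, t, rfl⟩
      simp only [List.length_cons] at hl
      cases a with
      | false =>
        left; left
        refine ⟨b :: c :: t, ⟨Or.inr ⟨?_, ?_, ?_⟩, by simp; omega⟩, rfl⟩
        · rintro ⟨v, hv⟩
          have h2 : false :: b :: c :: t =
              ([] : List Bool) ++ [false, true, true, false] ++ v := by
            simp [← hv]
          have := ho [] v h2
          subst this
          simp at hv
          obtain ⟨rfl, rfl, rfl⟩ := hv
          simp at hl; omega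
        · exact suffix_of_suffix_append (p := [false]) hs (by simp; omega)
        · intro u v h
          exact ho (false :: u) v (by simp [h])
      | true =>
        cases b with
        | false =>
          left; right
          refine ⟨c :: t, ⟨Or.inr ⟨?_, ?_, ?_⟩, by simp; omega⟩, rfl⟩
          · rintro ⟨v, hv⟩
            have h2 : true :: false :: c :: t =
                [true] ++ [false, true, true, false] ++ v := by
              simp [← hv]
            have := ho [true] v h2
            subst this
            simp at hv
            obtain ⟨rfl, rfl⟩ := hv
            simp at hl; omega
          · exact suffix_of_suffix_append (p := [true, false]) hs (by simp; omega)
          · intro u v h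
            exact ho (true :: false :: u) v (by simp [h])
        | true =>
          cases c with
          | false => exact absurd ⟨t, rfl⟩ hp
          | true =>
            right
            refine ⟨t, ⟨?_, ?_, ?_⟩, rfl⟩
            · exact suffix_of_suffix_append (p := [true, true, true]) hs (by simp; omega)
            · intro u v h
              exact ho (true :: true :: true :: u) v (by simp [h])
            · omega
  · rintro ((⟨w', ⟨hw', hl'⟩, rfl⟩ | ⟨w', ⟨hw', hl'⟩, rfl⟩) | ⟨y, ⟨hs, ho, hl⟩, rfl⟩)
    · rcases hw' with rfl | ⟨hp', hs', ho'⟩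
      · simp at hl'; omega
      · refine ⟨Or.inr ⟨?_, ?_, ?_⟩, by simp; omega⟩
        · rintro ⟨v, hv⟩; simp at hv
        · exact hs'.trans (List.suffix_cons false w')
        · intro u v h
          cases u with
          | nil =>
            simp at h
            exact absurd ⟨v, by simp [h]⟩ hp'
          | cons a u =>
            refine ho' u v ?_
            simpa using congrArg List.tail h
    · rcases hw' with rfl | ⟨hp', hs', ho'⟩
      · simp at hl'; omega
      · refine ⟨Or.inr ⟨?_, ?_, ?_⟩, by simp; omega⟩
        · rintro ⟨v, hv⟩; simp at hv
        · exact hs'.trans ((List.suffix_cons false w').trans (List.suffix_cons true _))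
        · intro u v h
          cases u with
          | nil => simp at h
          | cons a u =>
            cases u with
            | nil =>
              simp at h
              exact absurd ⟨v, by simp [h]⟩ hp'
            | cons b u =>
              refine ho' u v ?_
              have := congrArg List.tail (congrArg List.tail h)
              simpa using this
    · refine ⟨Or.inr ⟨?_, ?_, ?_⟩, by simp; omega⟩
      · rintro ⟨v, hv⟩; simp at hv
      · exact hs.trans ((List.suffix_cons true y).trans
          ((List.suffix_cons true _).trans (List.suffix_cons true _)))
      · intro u v h
        rcases u with _ | ⟨a, _ | ⟨b, _ | ⟨c, u⟩⟩⟩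
        · simp at h
        · simp at h
        · simp at h
        · refine ho u v ?_
          have := congrArg List.tail (congrArg List.tail (congrArg List.tail h))
          simpa using this

lemma G_eq (n : ℕ) (hn : 7 ≤ n) :
    G2 (n - 3) =
      {w ∈ D2 | w.length = n - 3} ∪
      ((true :: true :: false :: ·) '' {w ∈ D2 | w.length = n - 6}) := by
  ext y
  constructor
  · rintro ⟨hs, ho, hl⟩
    by_cases hp : [true, true, false] <+: y
    · right
      obtain ⟨z, rfl⟩ := hp
      simp only [List.cons_append, List.nil_append] at *
      refine ⟨z, ⟨?_, by simp at hl; omega⟩, rfl⟩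
      by_cases hz : z = [true, true, false]
      · exact Or.inl hz
      · refine Or.inr ⟨?_, ?_, ?_⟩
        · rintro ⟨v, hv⟩
          have h2 : true :: true :: false :: z =
              [true, true] ++ [false, true, true, false] ++ v := by
            simp [← hv]
          have := ho [true, true] v h2
          subst this
          simp at hv
          exact hz hv.symm
        · obtain ⟨u, hu⟩ := hs
          rcases u with _ | ⟨a, _ | ⟨b, _ | ⟨c, u⟩⟩⟩
          · simp at hu
          · simp at hu
          · simp at hu
            exact absurd hu.2.2.symm hz
          · refine ⟨u, ?_⟩
            have := congrArg List.tail (congrArg List.tail (congrArg List.tail hu))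
            simpa using this
        · intro u v h
          exact ho (true :: true :: false :: u) v (by simp [h])
    · left
      exact ⟨Or.inr ⟨hp, hs, ho⟩, hl⟩
  · rintro (⟨hw, hl⟩ | ⟨z, ⟨hz, hl⟩, rfl⟩)
    · rcases hw with rfl | ⟨hp, hs, ho⟩
      · simp at hl; omega
      · exact ⟨hs, ho, hl⟩
    · rcases hz with rfl | ⟨hp, hs, ho⟩
      · simp at hl
        refine ⟨⟨[true, true], rfl⟩, ?_, by simp; omega⟩
        intro u v h
        rcases u with _ | ⟨a, _ | ⟨b, _ | ⟨c, u⟩⟩⟩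
        · simp at h
        · simp at h
        · simp at h; exact h.2.2
        · exfalso
          have := congrArg List.length h
          simp at this
          omega
      · refine ⟨hs.trans (List.suffix_append [true, true, false] z), ?_, by simp at hl ⊢; omega⟩
        intro u v h
        rcases u with _ | ⟨a, _ | ⟨b, _ | ⟨c, u⟩⟩⟩
        · simp at h
        · simp at h
        · simp at h
          exact absurd ⟨v, by simp [h]⟩ hp
        · refine ho u v ?_
          have := congrArg List.tail (congrArg List.tail (congrArg List.tail h))
          simpa using this

lemma S_finite (m : ℕ) : {w ∈ D2 | w.length = m}.Finite :=
  (List.finite_length_eq Bool m).subset fun _ hw => hw.2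

lemma G_finite (m : ℕ) : (G2 m).Finite :=
  (List.finite_length_eq Bool m).subset fun _ hw => hw.2.2

/-- Lemma 2: for every `n ≥ 7`,
`f_n = f_{n-1} + f_{n-2} + f_{n-3} + f_{n-6}` for the code `D₂`. -/
theorem d2_count_recurrence (n : ℕ) (hn : 7 ≤ n) :
    f2 n = f2 (n - 1) + f2 (n - 2) + f2 (n - 3) + f2 (n - 6) := by
  have hG : (G2 (n - 3)).ncard = f2 (n - 3) + f2 (n - 6) := by
    rw [G_eq n hn, Set.ncard_union_eq ?_ (S_finite _) ((S_finite _).image _),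
      Set.ncard_image_of_injective _ (fun a b h => by simpa using h)]
    · rfl
    · rw [Set.disjoint_left]
      rintro x ⟨hx, hlx⟩ ⟨z, ⟨hz, hlz⟩, rfl⟩
      rcases hx with h | ⟨hp, _, _⟩
      · simp at h
        subst h
        simp at hlz
        omega
      · exact hp ⟨z, rfl⟩
  have key := congrArg Set.ncard (S_eq n hn)
  rw [Set.ncard_union_eq ?_ ?_ ?_, Set.ncard_union_eq ?_ ?_ ?_] at key
  · rw [Set.ncard_image_of_injective _ (List.cons_injective),
      Set.ncard_image_of_injective _ (fun a b h => by simpa using h),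
      Set.ncard_image_of_injective _ (fun a b h => by simpa using h), hG] at key
    unfold f2 at key ⊢
    omega
  · rw [Set.disjoint_left]
    rintro x ⟨a, _, rfl⟩ ⟨b, _, h⟩
    simp at h
  · exact (S_finite _).image _
  · exact (S_finite _).image _
  · rw [Set.disjoint_left]
    rintro x (⟨a, _, rfl⟩ | ⟨a, _, rfl⟩) ⟨b, _, h⟩ <;> simp at h
  · exact ((S_finite _).image _).union ((S_finite _).image _)
  · exact (G_finite _).image _
end

section
/- (Identity (10) in the proof of Lemma 2.) Let f_n be the number of codewords of length n in the code D_2. Then for every n ≥ 7, f_{n−2} + f_{n−5} = 2 f_{n−3} + f_{n−6}. -/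
section PrefixBorder

variable {α : Type*}

def prefixBorder (L : Set (List α)) : Set (List α) := {u | u.dropLast ∈ L ∧ u ∉ L}

theorem ncard_length_succ_dropLast_mem [Finite α] (L : Set (List α)) (n : ℕ) :
    {u : List α | u.length = n + 1 ∧ u.dropLast ∈ L}.ncard =
      {w ∈ L | w.length = n}.ncard * Nat.card α := by
  have himage : {u : List α | u.length = n + 1 ∧ u.dropLast ∈ L} =
      (fun p : List α × α => p.1 ++ [p.2]) '' ({w ∈ L | w.length = n} ×ˢ Set.univ) := by
    ext u
    constructor
    · rintro ⟨hlen, hmem⟩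
      have hu : u ≠ [] := by rintro rfl; simp at hlen
      exact ⟨(u.dropLast, u.getLast hu), ⟨⟨hmem, by simp [hlen]⟩, trivial⟩,
        List.dropLast_append_getLast hu⟩
    · rintro ⟨⟨w, a⟩, ⟨⟨hw, hlen⟩, -⟩, rfl⟩
      simp [hw, hlen]
  rw [himage, Set.ncard_image_of_injective _ ?_, Set.ncard_prod, Set.ncard_univ]
  rintro ⟨w, a⟩ ⟨w', a'⟩ h
  obtain ⟨rfl, h⟩ := List.append_inj' h rfl
  simpa using h

theorem ncard_length_succ_add_ncard_prefixBorder [Finite α] {L : Set (List α)}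
    (hL : ∀ w ∈ L, w.dropLast ∈ L) (n : ℕ) :
    {w ∈ L | w.length = n + 1}.ncard + {w ∈ prefixBorder L | w.length = n + 1}.ncard =
      {w ∈ L | w.length = n}.ncard * Nat.card α := by
  have hfin (P : List α → Prop) : {w | P w ∧ w.length = n + 1}.Finite :=
    (List.finite_length_eq α (n + 1)).subset fun w hw => hw.2
  rw [← ncard_length_succ_dropLast_mem, ← Set.ncard_union_eq _ (hfin _) (hfin _)]
  · congr 1
    ext u
    simp only [prefixBorder, Set.mem_union, Set.mem_ofPred_eq]
    have := hL u
    tauto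
  · rw [Set.disjoint_left]
    rintro u ⟨hu, -⟩ ⟨⟨-, hu'⟩, -⟩
    exact hu' hu

end PrefixBorder

def IsBad (w : List Bool) : Prop :=
  [true, true, false] <+: w ∨ [false, true, true, false] <:+: w

theorem IsBad.of_prefix {v w : List Bool} (hvw : v <+: w) (hv : IsBad v) : IsBad w :=
  hv.imp (fun h => h.trans hvw) fun h => h.trans hvw.isInfix

theorem isBad_concat {v : List Bool} {a : Bool} :
    IsBad (v ++ [a]) ↔
      IsBad v ∨ v ++ [a] = [true, true, false] ∨ [false, true, true, false] <:+ v ++ [a] := by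
  simp only [IsBad, List.prefix_concat_iff, List.infix_concat_iff,
    eq_comm (a := [true, true, false])]
  tauto

theorem not_isBad_concat_true {v : List Bool} (hv : ¬IsBad v) : ¬IsBad (v ++ [true]) := by
  rw [isBad_concat, List.suffix_concat_iff]
  simp only [hv, false_or, List.cons_ne_nil]
  rintro (h | ⟨x, h, -⟩) <;> simpa using congrArg List.getLast? h

theorem mem_D2_iff {w : List Bool} : w ∈ D2 ↔ ¬IsBad w.dropLast ∧ IsBad w := by
  constructor
  · rintro (rfl | ⟨hpre, ⟨u, rfl⟩, honly⟩)
    · unfold IsBad; decide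
    · rw [show (u ++ [false, true, true, false]).dropLast = u ++ [false, true, true] by simp]
      refine ⟨?_, Or.inr (List.suffix_append _ _).isInfix⟩
      rintro (h | ⟨s, t, h⟩)
      · exact hpre (h.trans ⟨[false], by simp⟩)
      · simpa using honly s (t ++ [false]) (by rw [← List.append_assoc, h]; simp)
  · rintro ⟨hdrop, hbad⟩
    rcases List.eq_nil_or_concat w with rfl | ⟨v, a, rfl⟩
    · exact absurd hbad hdrop
    rw [List.concat_eq_append] at hdrop hbad ⊢
    rw [List.dropLast_concat] at hdrop
    rcases isBad_concat.mp hbad with h | h | h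
    · exact absurd h hdrop
    · exact Or.inl h
    refine Or.inr ⟨?_, h, fun s t hst => ?_⟩
    · rw [List.prefix_concat_iff]
      rintro (h' | h')
      · simpa [← h'] using h.length_le
      · exact hdrop (Or.inl h')
    rcases List.eq_nil_or_concat t with rfl | ⟨t', c, rfl⟩
    · rfl
    rw [List.concat_eq_append, ← List.append_assoc] at hst
    exact absurd (Or.inr ⟨s, t', (List.append_inj' hst rfl).1.symm⟩) hdrop

theorem D2_eq_prefixBorder : D2 = prefixBorder {w | ¬IsBad w} := by
  ext w
  simp [mem_D2_iff, prefixBorder]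

theorem mem_D2_iff_exists_append_false {u : List Bool} :
    u ∈ D2 ↔ ∃ w, ¬IsBad w ∧ IsBad (w ++ [false]) ∧ u = w ++ [false] := by
  rw [mem_D2_iff]
  constructor
  · rintro ⟨hdrop, hbad⟩
    rcases List.eq_nil_or_concat u with rfl | ⟨w, a, rfl⟩
    · exact absurd hbad hdrop
    rw [List.concat_eq_append] at hdrop hbad ⊢
    rw [List.dropLast_concat] at hdrop
    cases a
    · exact ⟨w, hdrop, hbad, rfl⟩
    · exact absurd hbad (not_isBad_concat_true hdrop)
  · rintro ⟨w, hw, hbad, rfl⟩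
    rw [List.dropLast_concat]
    exact ⟨hw, hbad⟩

theorem D2_length_succ_eq_image (n : ℕ) :
    {u ∈ D2 | u.length = n + 1} =
      (· ++ [false]) '' {w | ¬IsBad w ∧ IsBad (w ++ [false]) ∧ w.length = n} := by
  ext u
  simp only [Set.mem_image, Set.mem_ofPred_eq, mem_D2_iff_exists_append_false]
  constructor
  · rintro ⟨⟨w, hw, hbad, rfl⟩, hlen⟩
    exact ⟨w, ⟨hw, hbad, by simpa using hlen⟩, rfl⟩
  · rintro ⟨w, ⟨hw, hbad, rfl⟩, rfl⟩
    exact ⟨⟨w, hw, hbad, rfl⟩, by simp⟩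

theorem D2_length_add_four_eq_image (n : ℕ) :
    {u ∈ D2 | u.length = n + 4} =
      (· ++ [false, true, true, false]) '' {w | ¬IsBad (w ++ [false]) ∧ w.length = n} := by
  ext u
  simp only [Set.mem_image, Set.mem_ofPred_eq]
  constructor
  · rintro ⟨hu, hlen⟩
    obtain ⟨v, hv, hbad, rfl⟩ := mem_D2_iff_exists_append_false.mp hu
    rcases isBad_concat.mp hbad with h | h | ⟨w, hw⟩
    · exact absurd h hv
    · simp [h] at hlen
    have hvw : v = w ++ [false, true, true] := by
      simpa using congrArg List.dropLast hw.symm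
    refine ⟨w, ⟨fun h => hv (h.of_prefix ?_), by simpa [hvw] using hlen⟩, hw⟩
    exact hvw ▸ ⟨[true, true], by simp⟩
  · rintro ⟨w, ⟨hw, rfl⟩, rfl⟩
    refine ⟨mem_D2_iff.mpr ⟨?_, Or.inr (List.suffix_append _ _).isInfix⟩, by simp⟩
    rw [show (w ++ [false, true, true, false]).dropLast = w ++ [false] ++ [true] ++ [true] by simp]
    exact not_isBad_concat_true (not_isBad_concat_true hw)

theorem ncard_not_isBad (n : ℕ) :
    {w ∈ {w | ¬IsBad w} | w.length = n}.ncard = f2 (n + 1) + f2 (n + 4) := by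
  rw [f2, f2, D2_length_succ_eq_image, D2_length_add_four_eq_image,
    Set.ncard_image_of_injective _ (List.append_left_injective _),
    Set.ncard_image_of_injective _ (List.append_left_injective _),
    ← Set.ncard_union_eq _ ((List.finite_length_eq Bool n).subset fun w hw => hw.2.2)
      ((List.finite_length_eq Bool n).subset fun w hw => hw.2)]
  · congr 1
    ext w
    simp only [Set.mem_union, Set.mem_ofPred_eq]
    have := mt (IsBad.of_prefix (List.prefix_append w [false]))
    tauto
  · rw [Set.disjoint_left]
    rintro w ⟨-, hbad, -⟩ ⟨hgood, -⟩
    exact hgood hbad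

theorem f2_add_five_add_f2_add_two (n : ℕ) : f2 (n + 5) + f2 (n + 2) = 2 * f2 (n + 4) + f2 (n + 1) := by
  have hstep := ncard_length_succ_add_ncard_prefixBorder (L := {w | ¬IsBad w})
    (fun w => mt (IsBad.of_prefix w.dropLast_prefix)) n
  rw [← D2_eq_prefixBorder, ← f2, ncard_not_isBad, ncard_not_isBad, Nat.card_eq_fintype_card,
    Fintype.card_bool] at hstep
  simp only [Nat.add_assoc, Nat.reduceAdd] at hstep
  omega

/-- identity (10): for every `n ≥ 7`,
`f_{n-2} + f_{n-5} = 2 f_{n-3} + f_{n-6}` for the code `D₂`. -/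
theorem d2_count_identity (n : ℕ) (hn : 7 ≤ n) :
    f2 (n - 2) + f2 (n - 5) = 2 * f2 (n - 3) + f2 (n - 6) := by
  obtain ⟨m, rfl⟩ := Nat.exists_eq_add_of_le' hn
  simpa using f2_add_five_add_f2_add_two m
end

section
/- (Recurrence (9).) Let f_n be the number of codewords of length n in the code D_2. Then for every n ≥ 6, f_n = f_{n−1} + 2 f_{n−2} − f_{n−3} + f_{n−5}. -/
namespace D2Aux

abbrev pat : List Bool := [false, true, true, false]

/-- All binary lists of length `n`. -/
def L : ℕ → Finset (List Bool)
  | 0 => {[]}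
  | n+1 => (L n).image (true :: ·) ∪ (L n).image (false :: ·)

lemma mem_L {n : ℕ} {w : List Bool} : w ∈ L n ↔ w.length = n := by
  induction n generalizing w with
  | zero => simp [L, List.length_eq_zero_iff]
  | succ n ih =>
    simp only [L, Finset.mem_union, Finset.mem_image]
    constructor
    · rintro (⟨u, hu, rfl⟩ | ⟨u, hu, rfl⟩) <;> simp [ih.mp hu]
    · intro h
      cases w with
      | nil => simp at h
      | cons a u =>
        simp at h
        cases a
        · exact Or.inr ⟨u, ih.mpr h, rfl⟩
        · exact Or.inl ⟨u, ih.mpr h, rfl⟩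

def Q (w : List Bool) : Prop :=
  w = [true, true, false] ∨
    (¬ [true, true, false] <+: w ∧ pat <:+ w ∧ ¬ pat <:+: w.dropLast)

instance : DecidablePred Q := fun w => by unfold Q; infer_instance

lemma only_suffix_iff (w : List Bool) :
    (∀ u v, w = u ++ pat ++ v → v = []) ↔ ¬ pat <:+: w.dropLast := by
  constructor
  · intro h hinf
    obtain ⟨s, t, hst⟩ := hinf
    have hne : w ≠ [] := by
      intro h0; rw [h0] at hst; simp at hst
    obtain ⟨x, hx⟩ : ∃ x, w = w.dropLast ++ [x] :=
      ⟨w.getLast hne, (List.dropLast_append_getLast hne).symm⟩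
    have := h s (t ++ [x]) (hx.trans (by rw [← hst]; simp))
    simp at this
  · intro h u v huv
    by_contra hv
    obtain ⟨v', x, rfl⟩ := (List.eq_nil_or_concat v).resolve_left hv
    apply h
    refine ⟨u, v', ?_⟩
    have : w = (u ++ pat ++ v') ++ [x] := by rw [huv]; simp [List.concat_eq_append]
    rw [this, List.dropLast_concat]

lemma mem_D2_iff (w : List Bool) :
    (w = [true, true, false] ∨
      (¬ [true, true, false] <+: w ∧ pat <:+ w ∧
        ∀ u v, w = u ++ pat ++ v → v = [])) ↔ Q w := by
  unfold Q
  rw [only_suffix_iff]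

/-- `good v`: `v` avoids `0110` and does not end with `011`. -/
def good (v : List Bool) : Prop := ¬ pat <:+: v ∧ ¬ [false, true, true] <:+ v

instance : DecidablePred good := fun v => by unfold good; infer_instance

def SA (m : ℕ) : Finset (List Bool) :=
  (L m).filter (fun v => good v ∧ [true, true, false] <+: v)
def SB (m : ℕ) : Finset (List Bool) :=
  (L m).filter (fun v => good v ∧ [true, false] <+: v)
def SC (m : ℕ) : Finset (List Bool) :=
  (L m).filter (fun v => good v ∧ [false] <+: v)
def SD (m : ℕ) : Finset (List Bool) :=
  (L m).filter (fun v => good v ∧ [true, true, true] <+: v)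

lemma class_cases {u : List Bool} (h : 3 ≤ u.length) :
    [true, true, false] <+: u ∨ [true, false] <+: u ∨ [false] <+: u ∨
      [true, true, true] <+: u := by
  match u, h with
  | a :: b :: c :: r, _ =>
    cases a <;> cases b <;> cases c <;> simp [List.cons_prefix_cons]

lemma cons_inj (b : Bool) : Function.Injective (b :: ·) := fun x y h => by
  simpa using h

/-- suffix `[f,t,t]` unaffected by cons when lengths differ -/
lemma suffix_ftt_cons {b : Bool} {u : List Bool} (h : 3 ≤ u.length) :
    [false, true, true] <:+ (b :: u) ↔ [false, true, true] <:+ u := by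
  rw [List.suffix_cons_iff]
  constructor
  · rintro (he | h') 
    · have := congrArg List.length he; simp at this; omega
    · exact h'
  · exact Or.inr

lemma good_cons_true {u : List Bool} (h : 3 ≤ u.length) :
    good (true :: u) ↔ good u := by
  unfold good
  rw [List.infix_cons_iff, suffix_ftt_cons h]
  simp [List.cons_prefix_cons, pat]

lemma good_cons_false {u : List Bool} (h : 3 ≤ u.length) :
    good (false :: u) ↔ (good u ∧ ¬ [true, true, false] <+: u) := by
  unfold good
  rw [List.infix_cons_iff, suffix_ftt_cons h]
  constructor
  · rintro ⟨h1, h2⟩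
    refine ⟨⟨fun hi => h1 (Or.inr hi), h2⟩, fun hp => h1 (Or.inl ?_)⟩
    simpa [pat, List.cons_prefix_cons] using hp
  · rintro ⟨⟨h1, h2⟩, h3⟩
    refine ⟨?_, h2⟩
    rintro (hp | hi)
    · exact h3 (by simpa [pat, List.cons_prefix_cons] using hp)
    · exact h1 hi

lemma SA_succ {m : ℕ} (hm : 3 ≤ m) : SA (m + 1) = (SB m).image (true :: ·) := by
  ext v
  simp only [SA, SB, Finset.mem_filter, Finset.mem_image, mem_L]
  constructor
  · rintro ⟨hlen, hg, ⟨r, rfl⟩⟩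
    have hr : (true :: false :: r).length = m := by simp at hlen ⊢; omega
    refine ⟨true :: false :: r, ⟨hr, ?_, by simp [List.cons_prefix_cons]⟩, rfl⟩
    rw [← good_cons_true (by rw [hr]; exact hm)]
    exact hg
  · rintro ⟨u, ⟨hlen, hg, ⟨r, rfl⟩⟩, rfl⟩
    refine ⟨by simp at hlen ⊢; omega, ?_, by simp [List.cons_prefix_cons]⟩
    rw [good_cons_true (by rw [hlen]; exact hm)]
    exact hg

lemma SB_succ {m : ℕ} (hm : 3 ≤ m) : SB (m + 1) = (SC m).image (true :: ·) := by
  ext v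
  simp only [SB, SC, Finset.mem_filter, Finset.mem_image, mem_L]
  constructor
  · rintro ⟨hlen, hg, ⟨r, rfl⟩⟩
    have hr : (false :: r).length = m := by simp at hlen ⊢; omega
    refine ⟨false :: r, ⟨hr, ?_, by simp [List.cons_prefix_cons]⟩, rfl⟩
    rw [← good_cons_true (by rw [hr]; exact hm)]
    exact hg
  · rintro ⟨u, ⟨hlen, hg, ⟨r, rfl⟩⟩, rfl⟩
    refine ⟨by simp at hlen ⊢; omega, ?_, by simp [List.cons_prefix_cons]⟩
    rw [good_cons_true (by rw [hlen]; exact hm)]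
    exact hg

lemma SD_succ {m : ℕ} (hm : 3 ≤ m) : SD (m + 1) = (SA m ∪ SD m).image (true :: ·) := by
  ext v
  simp only [SD, SA, Finset.mem_filter, Finset.mem_image, Finset.mem_union, mem_L]
  constructor
  · rintro ⟨hlen, hg, ⟨r, rfl⟩⟩
    have hr : (true :: true :: r).length = m := by simp at hlen ⊢; omega
    have hg' : good (true :: true :: r) := by
      rw [← good_cons_true (by rw [hr]; exact hm)]; exact hg
    refine ⟨true :: true :: r, ?_, rfl⟩
    rcases r with _ | ⟨c, r'⟩
    · simp at hr; omega
    · cases c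
      · exact Or.inl ⟨hr, hg', by simp [List.cons_prefix_cons]⟩
      · exact Or.inr ⟨hr, hg', by simp [List.cons_prefix_cons]⟩
  · rintro ⟨u, hu, rfl⟩
    have hmem : u.length = m ∧ good u ∧ [true, true] <+: u := by
      rcases hu with ⟨h1, h2, ⟨r, rfl⟩⟩ | ⟨h1, h2, ⟨r, rfl⟩⟩ <;>
        exact ⟨h1, h2, by simp [List.cons_prefix_cons]⟩
    obtain ⟨hlen, hg, ⟨r, rfl⟩⟩ := hmem
    refine ⟨by simp at hlen ⊢; omega, ?_, by simp [List.cons_prefix_cons]⟩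
    rw [good_cons_true (by rw [hlen]; exact hm)]
    exact hg

lemma SC_succ {m : ℕ} (hm : 3 ≤ m) :
    SC (m + 1) = (SB m ∪ SC m ∪ SD m).image (false :: ·) := by
  ext v
  simp only [SC, SB, SD, Finset.mem_filter, Finset.mem_image, Finset.mem_union, mem_L]
  constructor
  · rintro ⟨hlen, hg, ⟨r, rfl⟩⟩
    have hr : r.length = m := by simp at hlen ⊢; omega
    simp only [List.singleton_append] at hg ⊢
    rw [good_cons_false (by rw [hr]; exact hm)] at hg
    obtain ⟨hgr, hnA⟩ := hg
    refine ⟨r, ?_, rfl⟩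
    rcases class_cases (by rw [hr]; exact hm) with hA | hB | hC | hD
    · exact absurd hA hnA
    · exact Or.inl (Or.inl ⟨hr, hgr, hB⟩)
    · exact Or.inl (Or.inr ⟨hr, hgr, hC⟩)
    · exact Or.inr ⟨hr, hgr, hD⟩
  · rintro ⟨u, hu, rfl⟩
    have hmem : u.length = m ∧ good u ∧ ¬ [true, true, false] <+: u := by
      rcases hu with (⟨h1, h2, ⟨r, rfl⟩⟩ | ⟨h1, h2, ⟨r, rfl⟩⟩) | ⟨h1, h2, ⟨r, rfl⟩⟩ <;>
        refine ⟨h1, h2, ?_⟩ <;> simp [List.cons_prefix_cons]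
    obtain ⟨hlen, hg, hnA⟩ := hmem
    refine ⟨by simp; omega, ?_, by simp⟩
    rw [good_cons_false (by rw [hlen]; exact hm)]
    exact ⟨hg, hnA⟩

section reversing

lemma suffix_iff_rev {p l : List Bool} : p <:+ l ↔ p.reverse <+: l.reverse := by
  rw [List.reverse_prefix]

lemma infix_concat_iff {p l : List Bool} {b : Bool} :
    p <:+: l ++ [b] ↔ p <:+: l ∨ p <:+ l ++ [b] := by
  rw [← List.reverse_infix, ← List.reverse_infix (l₁ := p) (l₂ := l),
    suffix_iff_rev, List.reverse_append]
  exact List.infix_cons_iff.trans or_comm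

lemma pat_infix_reverse {y : List Bool} : pat <:+: y.reverse ↔ pat <:+: y := by
  conv_lhs => rw [show (pat : List Bool) = pat.reverse from rfl]
  rw [List.reverse_infix]

lemma ftt_suffix_reverse {y : List Bool} :
    [false, true, true] <:+ y.reverse ↔ [true, true, false] <+: y := by
  rw [show ([false, true, true] : List Bool) = [true, true, false].reverse from rfl,
    List.reverse_suffix]

lemma ttf_prefix_reverse {y : List Bool} :
    [true, true, false] <+: y.reverse ↔ [false, true, true] <:+ y := by
  rw [show ([true, true, false] : List Bool) = [false, true, true].reverse from rfl,
    List.reverse_prefix]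

lemma pat_suffix_concat_false {x : List Bool} :
    pat <:+ x ++ [false] ↔ [false, true, true] <:+ x := by
  rw [suffix_iff_rev, List.reverse_append]
  show (false :: [true, true, false] : List Bool) <+: false :: x.reverse ↔ _
  rw [List.cons_prefix_cons]
  simp only [true_and]
  rw [show ([true, true, false] : List Bool) = [false, true, true].reverse from rfl,
    List.reverse_prefix]

lemma pat_not_suffix_concat_true {x : List Bool} : ¬ pat <:+ x ++ [true] := by
  rw [suffix_iff_rev, List.reverse_append]
  show ¬ (false :: [true, true, false] : List Bool) <+: true :: x.reverse
  rw [List.cons_prefix_cons]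
  simp

lemma pat_infix_concat3 {x : List Bool} :
    pat <:+: x ++ [false, true, true] ↔ pat <:+: x ∨ [false, true, true] <:+ x := by
  have h1 : x ++ [false, true, true] = ((x ++ [false]) ++ [true]) ++ [true] := by simp
  rw [h1, infix_concat_iff, infix_concat_iff, infix_concat_iff,
    pat_suffix_concat_false]
  have h2 := pat_not_suffix_concat_true (x := x ++ [false])
  have h3 := pat_not_suffix_concat_true (x := (x ++ [false]) ++ [true])
  tauto

lemma prefix_of_append_le {p x y : List Bool} (h : p <+: x ++ y)
    (hl : p.length ≤ x.length) : p <+: x := by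
  rw [List.prefix_iff_eq_take] at h ⊢
  rwa [List.take_append_of_le_length hl, ← List.prefix_iff_eq_take,
    List.prefix_iff_eq_take] at h

end reversing

lemma filter_eq_image {m : ℕ} (hm : 3 ≤ m) :
    (L (m + 4)).filter Q = (SB m ∪ SC m ∪ SD m).image (fun v => v.reverse ++ pat) := by
  ext w
  simp only [Finset.mem_filter, Finset.mem_image, Finset.mem_union, mem_L, SB, SC, SD]
  constructor
  · rintro ⟨hlen, hQ⟩
    rcases hQ with rfl | ⟨hnp, hsf, hni⟩
    · simp only [List.length_cons, List.length_nil] at hlen; omega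
    obtain ⟨y, rfl⟩ := hsf
    have hylen : y.length = m := by simp [pat] at hlen; omega
    have hdl : (y ++ pat).dropLast = y ++ [false, true, true] := by
      rw [show y ++ pat = (y ++ [false, true, true]) ++ [false] by simp [pat],
        List.dropLast_concat]
    rw [hdl] at hni
    refine ⟨y.reverse, ?_, by simp⟩
    have hrl : y.reverse.length = m := by simpa using hylen
    have hgood : good y.reverse := by
      constructor
      · intro h
        rw [pat_infix_reverse] at h
        exact hni (h.trans ⟨[], [false, true, true], by simp⟩)
      · intro h
        rw [ftt_suffix_reverse] at h
        exact hnp (h.trans (List.prefix_append y pat))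
    have hnA : ¬ [true, true, false] <+: y.reverse := by
      intro h
      rw [ttf_prefix_reverse] at h
      obtain ⟨z, rfl⟩ := h
      refine hni ⟨z, [true, true], by simp [pat]⟩
    rcases class_cases (by rw [hrl]; exact hm) with hA | hB | hC | hD
    · exact absurd hA hnA
    · exact Or.inl (Or.inl ⟨hrl, hgood, hB⟩)
    · exact Or.inl (Or.inr ⟨hrl, hgood, hC⟩)
    · exact Or.inr ⟨hrl, hgood, hD⟩
  · rintro ⟨v, hv, rfl⟩
    have hfacts : v.length = m ∧ good v ∧ ¬ [true, true, false] <+: v := by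
      rcases hv with (⟨h1, h2, ⟨r, rfl⟩⟩ | ⟨h1, h2, ⟨r, rfl⟩⟩) | ⟨h1, h2, ⟨r, rfl⟩⟩ <;>
        refine ⟨h1, h2, ?_⟩ <;> simp [List.cons_prefix_cons]
    obtain ⟨hlen, hgood, hnA⟩ := hfacts
    have hrl : v.reverse.length = m := by simpa using hlen
    refine ⟨by simp [pat, hlen], Or.inr ⟨?_, List.suffix_append _ _, ?_⟩⟩
    · intro h
      have h' : [true, true, false] <+: v.reverse :=
        prefix_of_append_le h (by rw [hrl]; simpa using hm)
      exact hgood.2 (ttf_prefix_reverse.mp h')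
    · have hdl : (v.reverse ++ pat).dropLast = v.reverse ++ [false, true, true] := by
        rw [show v.reverse ++ pat = (v.reverse ++ [false, true, true]) ++ [false] by
          simp [pat], List.dropLast_concat]
      rw [hdl, pat_infix_concat3]
      rintro (h | h)
      · exact hgood.1 (pat_infix_reverse.mp h)
      · exact hnA (ftt_suffix_reverse.mp h)

section cards

lemma disjBC {m : ℕ} : Disjoint (SB m) (SC m) := by
  rw [Finset.disjoint_left]
  intro a ha hb
  simp only [SB, SC, Finset.mem_filter] at ha hb
  obtain ⟨r, rfl⟩ := ha.2.2
  have := hb.2.2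
  simp [List.cons_prefix_cons] at this

lemma disjBD {m : ℕ} : Disjoint (SB m) (SD m) := by
  rw [Finset.disjoint_left]
  intro a ha hb
  simp only [SB, SD, Finset.mem_filter] at ha hb
  obtain ⟨r, rfl⟩ := ha.2.2
  have := hb.2.2
  simp [List.cons_prefix_cons] at this

lemma disjCD {m : ℕ} : Disjoint (SC m) (SD m) := by
  rw [Finset.disjoint_left]
  intro a ha hb
  simp only [SC, SD, Finset.mem_filter] at ha hb
  obtain ⟨r, rfl⟩ := ha.2.2
  have := hb.2.2
  simp [List.cons_prefix_cons] at this

lemma disjAD {m : ℕ} : Disjoint (SA m) (SD m) := by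
  rw [Finset.disjoint_left]
  intro a ha hb
  simp only [SA, SD, Finset.mem_filter] at ha hb
  obtain ⟨r, rfl⟩ := ha.2.2
  have := hb.2.2
  simp [List.cons_prefix_cons] at this

lemma card_union3 (m : ℕ) :
    (SB m ∪ SC m ∪ SD m).card = (SB m).card + (SC m).card + (SD m).card := by
  rw [Finset.card_union_of_disjoint, Finset.card_union_of_disjoint disjBC]
  rw [Finset.disjoint_union_left]
  exact ⟨disjBD, disjCD⟩

lemma cardA {m : ℕ} (hm : 3 ≤ m) : (SA (m + 1)).card = (SB m).card := by
  rw [SA_succ hm, Finset.card_image_of_injective _ (cons_inj true)]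

lemma cardB {m : ℕ} (hm : 3 ≤ m) : (SB (m + 1)).card = (SC m).card := by
  rw [SB_succ hm, Finset.card_image_of_injective _ (cons_inj true)]

lemma cardC {m : ℕ} (hm : 3 ≤ m) :
    (SC (m + 1)).card = (SB m).card + (SC m).card + (SD m).card := by
  rw [SC_succ hm, Finset.card_image_of_injective _ (cons_inj false), card_union3]

lemma cardD {m : ℕ} (hm : 3 ≤ m) :
    (SD (m + 1)).card = (SA m).card + (SD m).card := by
  rw [SD_succ hm, Finset.card_image_of_injective _ (cons_inj true),
    Finset.card_union_of_disjoint disjAD]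

lemma rev_pat_inj : Function.Injective (fun v : List Bool => v.reverse ++ pat) := by
  intro a b h
  simp only at h
  have hl : a.reverse.length = b.reverse.length := by
    have := congrArg List.length h
    simp at this
    simp [this]
  have := List.append_inj_left h hl
  simpa using this

/-- `g m` counts the good words of length `m` in classes B, C, D. -/
def g (m : ℕ) : ℕ := (SB m).card + (SC m).card + (SD m).card

lemma F_eq {m : ℕ} (hm : 3 ≤ m) : ((L (m + 4)).filter Q).card = g m := by
  rw [filter_eq_image hm, Finset.card_image_of_injective _ rev_pat_inj, card_union3, g]

end cards

lemma f2_eq (n : ℕ) : f2 n = ((L n).filter Q).card := by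
  rw [f2]
  have h : {w ∈ D2 | w.length = n} = ↑((L n).filter Q) := by
    ext w
    simp only [Set.mem_setOf_eq, Finset.coe_filter, mem_L]
    constructor
    · rintro ⟨hd, hl⟩
      exact ⟨hl, (mem_D2_iff w).mp hd⟩
    · rintro ⟨hl, hq⟩
      exact ⟨(mem_D2_iff w).mpr hq, hl⟩
  rw [h, Set.ncard_coe_finset]

lemma base_vals : (SA 3).card = 1 ∧ (SB 3).card = 2 ∧ (SC 3).card = 3 ∧
    (SD 3).card = 1 := by decide

set_option maxRecDepth 40000 in
lemma f2_small : f2 1 = 0 ∧ f2 2 = 0 ∧ f2 3 = 1 ∧ f2 4 = 1 ∧ f2 5 = 2 ∧ f2 6 = 3 := by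
  refine ⟨?_, ?_, ?_, ?_, ?_, ?_⟩ <;> rw [f2_eq] <;> decide

lemma f2_G {m : ℕ} (hm : 3 ≤ m) : f2 (m + 4) = g m := by
  rw [f2_eq]; exact F_eq hm

lemma g_rec {m : ℕ} (hm : 3 ≤ m) : g (m+5) + g (m+2) = g (m+4) + 2 * g (m+3) + g m := by
  have hA1 : (SA (m+1)).card = (SB m).card := cardA (by omega)
  have hA2 : (SA (m+2)).card = (SB (m+1)).card := cardA (by omega)
  have hA3 : (SA (m+3)).card = (SB (m+2)).card := cardA (by omega)
  have hA4 : (SA (m+4)).card = (SB (m+3)).card := cardA (by omega)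
  have hA5 : (SA (m+5)).card = (SB (m+4)).card := cardA (by omega)
  have hB1 : (SB (m+1)).card = (SC m).card := cardB (by omega)
  have hB2 : (SB (m+2)).card = (SC (m+1)).card := cardB (by omega)
  have hB3 : (SB (m+3)).card = (SC (m+2)).card := cardB (by omega)
  have hB4 : (SB (m+4)).card = (SC (m+3)).card := cardB (by omega)
  have hB5 : (SB (m+5)).card = (SC (m+4)).card := cardB (by omega)
  have hC1 : (SC (m+1)).card = (SB m).card + (SC m).card + (SD m).card := cardC (by omega)
  have hC2 : (SC (m+2)).card = (SB (m+1)).card + (SC (m+1)).card + (SD (m+1)).card :=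
    cardC (by omega)
  have hC3 : (SC (m+3)).card = (SB (m+2)).card + (SC (m+2)).card + (SD (m+2)).card :=
    cardC (by omega)
  have hC4 : (SC (m+4)).card = (SB (m+3)).card + (SC (m+3)).card + (SD (m+3)).card :=
    cardC (by omega)
  have hC5 : (SC (m+5)).card = (SB (m+4)).card + (SC (m+4)).card + (SD (m+4)).card :=
    cardC (by omega)
  have hD1 : (SD (m+1)).card = (SA m).card + (SD m).card := cardD (by omega)
  have hD2 : (SD (m+2)).card = (SA (m+1)).card + (SD (m+1)).card := cardD (by omega)
  have hD3 : (SD (m+3)).card = (SA (m+2)).card + (SD (m+2)).card := cardD (by omega)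
  have hD4 : (SD (m+4)).card = (SA (m+3)).card + (SD (m+3)).card := cardD (by omega)
  have hD5 : (SD (m+5)).card = (SA (m+4)).card + (SD (m+4)).card := cardD (by omega)
  simp only [g]
  omega

lemma g_vals : g 3 = 6 ∧ g 4 = 11 ∧ g 5 = 21 ∧ g 6 = 39 ∧ g 7 = 73 := by
  obtain ⟨hA3, hB3, hC3, hD3⟩ := base_vals
  have hA4 : (SA 4).card = (SB 3).card := cardA (by omega)
  have hB4 : (SB 4).card = (SC 3).card := cardB (by omega)
  have hC4 : (SC 4).card = (SB 3).card + (SC 3).card + (SD 3).card := cardC (by omega)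
  have hD4 : (SD 4).card = (SA 3).card + (SD 3).card := cardD (by omega)
  have hA5 : (SA 5).card = (SB 4).card := cardA (by omega)
  have hB5 : (SB 5).card = (SC 4).card := cardB (by omega)
  have hC5 : (SC 5).card = (SB 4).card + (SC 4).card + (SD 4).card := cardC (by omega)
  have hD5 : (SD 5).card = (SA 4).card + (SD 4).card := cardD (by omega)
  have hA6 : (SA 6).card = (SB 5).card := cardA (by omega)
  have hB6 : (SB 6).card = (SC 5).card := cardB (by omega)
  have hC6 : (SC 6).card = (SB 5).card + (SC 5).card + (SD 5).card := cardC (by omega)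
  have hD6 : (SD 6).card = (SA 5).card + (SD 5).card := cardD (by omega)
  have hB7 : (SB 7).card = (SC 6).card := cardB (by omega)
  have hC7 : (SC 7).card = (SB 6).card + (SC 6).card + (SD 6).card := cardC (by omega)
  have hD7 : (SD 7).card = (SA 6).card + (SD 6).card := cardD (by omega)
  simp only [g]
  omega

lemma f2_vals : f2 1 = 0 ∧ f2 2 = 0 ∧ f2 3 = 1 ∧ f2 4 = 1 ∧ f2 5 = 2 ∧ f2 6 = 3 ∧
    f2 7 = 6 ∧ f2 8 = 11 ∧ f2 9 = 21 ∧ f2 10 = 39 ∧ f2 11 = 73 := by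
  obtain ⟨g3, g4, g5, g6, g7⟩ := g_vals
  obtain ⟨v1, v2, v3, v4, v5, v6⟩ := f2_small
  have h7 : f2 7 = g 3 := f2_G (by omega)
  have h8 : f2 8 = g 4 := f2_G (by omega)
  have h9 : f2 9 = g 5 := f2_G (by omega)
  have h10 : f2 10 = g 6 := f2_G (by omega)
  have h11 : f2 11 = g 7 := f2_G (by omega)
  omega

end D2Aux

/-- recurrence (9): for every `n ≥ 6`,
`f_n = f_{n-1} + 2 f_{n-2} - f_{n-3} + f_{n-5}` for the code `D₂`. -/
theorem d2_count_recurrence' (n : ℕ) (hn : 6 ≤ n) :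
    (f2 n : ℤ) = f2 (n - 1) + 2 * f2 (n - 2) - f2 (n - 3) + f2 (n - 5) := by
  rcases lt_or_ge n 12 with h | h
  · obtain ⟨v1, v2, v3, v4, v5, v6, v7, v8, v9, v10, v11⟩ := D2Aux.f2_vals
    interval_cases n <;> norm_num [v1, v2, v3, v4, v5, v6, v7, v8, v9, v10, v11]
  · obtain ⟨m, rfl⟩ : ∃ m, n = m + 9 := ⟨n - 9, by omega⟩
    have hm : 3 ≤ m := by omega
    have e0 : m + 9 = (m + 5) + 4 := by omega
    have e1 : m + 9 - 1 = (m + 4) + 4 := by omega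
    have e2 : m + 9 - 2 = (m + 3) + 4 := by omega
    have e3 : m + 9 - 3 = (m + 2) + 4 := by omega
    have e5 : m + 9 - 5 = m + 4 := by omega
    rw [e1, e2, e3, e5, e0]
    rw [D2Aux.f2_G (by omega : 3 ≤ m + 5), D2Aux.f2_G (by omega : 3 ≤ m + 4),
      D2Aux.f2_G (by omega : 3 ≤ m + 3), D2Aux.f2_G (by omega : 3 ≤ m + 2),
      D2Aux.f2_G hm]
    have := D2Aux.g_rec hm
    omega
end

section
/- (Recurrence (12).) Let f_n be the number of codewords of length n in the code D_2 and let s_n = ∑_{i=1}^n f_i be the number of codewords of length at most n. Then for every n ≥ 6, s_n = s_{n−1} + s_{n−2} + s_{n−3} + s_{n−6}. -/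
/-- `s2 n` is the number of codewords of `D₂` of length at most `n`. -/
noncomputable def s2 (n : ℕ) : ℕ := ∑ i ∈ Finset.Icc 1 n, f2 i

/-- The "interior" predicate: `u ++ 0110` does not start with `110` and
`u ++ 011` does not contain `0110` as a factor. -/
def Pp (u : List Bool) : Prop :=
  ¬ ([true, true, false] <+: (u ++ [false, true, true, false])) ∧
  ¬ ([false, true, true, false] <:+: (u ++ [false, true, true]))

def Qq (u : List Bool) : Prop :=
  ¬ ([false, true, true, false] <:+: (u ++ [false, true, true]))

instance : DecidablePred Pp := fun u => by unfold Pp; infer_instance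
instance : DecidablePred Qq := fun u => by unfold Qq; infer_instance

def Aset (k : ℕ) : Set (List Bool) := {u | Pp u ∧ u.length = k}
def Bset (k : ℕ) : Set (List Bool) := {u | Qq u ∧ u.length = k}

noncomputable def An (k : ℕ) : ℕ := (Aset k).ncard
noncomputable def Bn (k : ℕ) : ℕ := (Bset k).ncard

lemma Aset_fin (k : ℕ) : (Aset k).Finite :=
  (List.finite_length_eq Bool k).subset (fun _ hu => hu.2)

lemma Bset_fin (k : ℕ) : (Bset k).Finite :=
  (List.finite_length_eq Bool k).subset (fun _ hu => hu.2)

lemma prefix_snoc_iff {p y : List Bool} {c : Bool} (h : p.length ≤ y.length) :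
    p <+: y ++ [c] ↔ p <+: y := by
  constructor
  · intro hp
    rw [List.prefix_iff_eq_take] at hp ⊢
    rwa [List.take_append_of_le_length h] at hp
  · exact fun hp => hp.trans (List.prefix_append _ _)

lemma prefix011_iff (v : List Bool) :
    [true, true, false] <+: (v ++ [false, true, true]) ↔
    [true, true, false] <+: (v ++ [false, true, true, false]) := by
  have h : v ++ [false, true, true, false] = (v ++ [false, true, true]) ++ [false] := by simp
  rw [h, prefix_snoc_iff (by simp)]

lemma infix_cons_false (y : List Bool) :
    ([false, true, true, false] <:+: (false :: y)) ↔
    ([true, true, false] <+: y) ∨ ([false, true, true, false] <:+: y) := by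
  rw [List.infix_cons_iff, List.cons_prefix_cons]
  simp

lemma infix_cons_true (y : List Bool) :
    ([false, true, true, false] <:+: (true :: y)) ↔
    ([false, true, true, false] <:+: y) := by
  rw [List.infix_cons_iff, List.cons_prefix_cons]
  simp

lemma Q_true (v : List Bool) : Qq (true :: v) ↔ Qq v := by
  unfold Qq
  rw [show (true :: v) ++ [false, true, true] = true :: (v ++ [false, true, true]) from rfl,
    infix_cons_true]

lemma Q_false (v : List Bool) : Qq (false :: v) ↔ Pp v := by
  unfold Qq Pp
  rw [show (false :: v) ++ [false, true, true] = false :: (v ++ [false, true, true]) from rfl,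
    infix_cons_false, prefix011_iff]
  tauto

lemma P_false (v : List Bool) : Pp (false :: v) ↔ Pp v := by
  have h1 : ¬ ([true, true, false] <+: ((false :: v) ++ [false, true, true, false])) := by
    rw [show (false :: v) ++ [false, true, true, false]
        = false :: (v ++ [false, true, true, false]) from rfl, List.cons_prefix_cons]
    simp
  constructor
  · intro h
    exact (Q_false v).mp h.2
  · intro h
    exact ⟨h1, ((Q_false v).mpr h : Qq (false :: v))⟩

lemma P_10 (v : List Bool) : Pp (true :: false :: v) ↔ Pp v := by
  have h1 : ¬ ([true, true, false] <+: ((true :: false :: v) ++ [false, true, true, false])) := by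
    rw [show (true :: false :: v) ++ [false, true, true, false]
        = true :: false :: (v ++ [false, true, true, false]) from rfl, List.cons_prefix_cons,
        List.cons_prefix_cons]
    simp
  have h2 : Qq (true :: false :: v) ↔ Pp v := by
    rw [show (true :: false :: v : List Bool) = true :: (false :: v) from rfl]
    rw [Q_true, Q_false]
  constructor
  · intro h
    exact h2.mp h.2
  · intro h
    exact ⟨h1, h2.mpr h⟩

lemma P_111 (v : List Bool) : Pp (true :: true :: true :: v) ↔ Qq v := by
  have h1 : ¬ ([true, true, false] <+: ((true :: true :: true :: v) ++ [false, true, true, false])) := by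
    rw [show (true :: true :: true :: v) ++ [false, true, true, false]
        = true :: true :: true :: (v ++ [false, true, true, false]) from rfl,
        List.cons_prefix_cons, List.cons_prefix_cons, List.cons_prefix_cons]
    simp
  have h2 : Qq (true :: true :: true :: v) ↔ Qq v := by
    rw [show (true :: true :: true :: v : List Bool) = true :: (true :: (true :: v)) from rfl]
    rw [Q_true, Q_true, Q_true]
  exact ⟨fun h => h2.mp h.2, fun h => ⟨h1, h2.mpr h⟩⟩

lemma P_110 (v : List Bool) : ¬ Pp (true :: true :: false :: v) := by
  intro h
  exact h.1 ⟨v ++ [false, true, true, false], rfl⟩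
lemma Aset_split (k : ℕ) :
    Aset (k + 3) =
      ((fun v => false :: v) '' Aset (k + 2) ∪ (fun v => true :: false :: v) '' Aset (k + 1)) ∪
        (fun v => true :: true :: true :: v) '' Bset k := by
  ext u
  constructor
  · rintro ⟨hP, hlen⟩
    rcases u with _ | ⟨a, u⟩; · simp at hlen
    rcases u with _ | ⟨b, u⟩; · simp at hlen
    rcases u with _ | ⟨c, u⟩; · simp at hlen
    simp only [List.length_cons] at hlen
    cases a
    · exact Or.inl (Or.inl ⟨b :: c :: u, ⟨(P_false _).mp hP, by simp; omega⟩, rfl⟩)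
    · cases b
      · exact Or.inl (Or.inr ⟨c :: u, ⟨(P_10 _).mp hP, by simp; omega⟩, rfl⟩)
      · cases c
        · exact absurd hP (P_110 u)
        · exact Or.inr ⟨u, ⟨(P_111 _).mp hP, by omega⟩, rfl⟩
  · rintro ((⟨v, ⟨hv, hlen⟩, rfl⟩ | ⟨v, ⟨hv, hlen⟩, rfl⟩) | ⟨v, ⟨hv, hlen⟩, rfl⟩)
    · exact ⟨(P_false v).mpr hv, by simp [hlen]⟩
    · exact ⟨(P_10 v).mpr hv, by simp [hlen]⟩
    · exact ⟨(P_111 v).mpr hv, by simp [hlen]⟩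

lemma Bset_split (k : ℕ) :
    Bset (k + 1) = (fun v => true :: v) '' Bset k ∪ (fun v => false :: v) '' Aset k := by
  ext u
  constructor
  · rintro ⟨hQ, hlen⟩
    rcases u with _ | ⟨a, u⟩; · simp at hlen
    simp only [List.length_cons] at hlen
    cases a
    · exact Or.inr ⟨u, ⟨(Q_false _).mp hQ, by omega⟩, rfl⟩
    · exact Or.inl ⟨u, ⟨(Q_true _).mp hQ, by omega⟩, rfl⟩
  · rintro (⟨v, ⟨hv, hlen⟩, rfl⟩ | ⟨v, ⟨hv, hlen⟩, rfl⟩)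
    · exact ⟨(Q_true v).mpr hv, by simp [hlen]⟩
    · exact ⟨(Q_false v).mpr hv, by simp [hlen]⟩

lemma An_rec (k : ℕ) : An (k + 3) = An (k + 2) + An (k + 1) + Bn k := by
  have hinj0 : Function.Injective (fun v : List Bool => false :: v) :=
    fun a b h => by simpa using h
  have hinj10 : Function.Injective (fun v : List Bool => true :: false :: v) :=
    fun a b h => by simpa using h
  have hinj111 : Function.Injective (fun v : List Bool => true :: true :: true :: v) :=
    fun a b h => by simpa using h
  have d12 : Disjoint ((fun v : List Bool => false :: v) '' Aset (k + 2))
      ((fun v : List Bool => true :: false :: v) '' Aset (k + 1)) := by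
    rw [Set.disjoint_left]
    rintro x ⟨v, _, rfl⟩ ⟨w, _, h⟩
    simp at h
  have d3 : Disjoint ((fun v : List Bool => false :: v) '' Aset (k + 2) ∪
      (fun v : List Bool => true :: false :: v) '' Aset (k + 1))
      ((fun v : List Bool => true :: true :: true :: v) '' Bset k) := by
    rw [Set.disjoint_left]
    rintro x (⟨v, _, rfl⟩ | ⟨v, _, rfl⟩) ⟨w, _, h⟩ <;> simp at h
  rw [An, Aset_split,
    Set.ncard_union_eq d3 (((Aset_fin _).image _).union ((Aset_fin _).image _))
      ((Bset_fin _).image _),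
    Set.ncard_union_eq d12 ((Aset_fin _).image _) ((Aset_fin _).image _),
    Set.ncard_image_of_injective _ hinj0, Set.ncard_image_of_injective _ hinj10,
    Set.ncard_image_of_injective _ hinj111]
  rfl

lemma Bn_rec (k : ℕ) : Bn (k + 1) = Bn k + An k := by
  have hinj1 : Function.Injective (fun v : List Bool => true :: v) :=
    fun a b h => by simpa using h
  have hinj0 : Function.Injective (fun v : List Bool => false :: v) :=
    fun a b h => by simpa using h
  have d : Disjoint ((fun v : List Bool => true :: v) '' Bset k)
      ((fun v : List Bool => false :: v) '' Aset k) := by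
    rw [Set.disjoint_left]
    rintro x ⟨v, _, rfl⟩ ⟨w, _, h⟩
    simp at h
  rw [Bn, Bset_split, Set.ncard_union_eq d ((Bset_fin _).image _) ((Aset_fin _).image _),
    Set.ncard_image_of_injective _ hinj1, Set.ncard_image_of_injective _ hinj0]
  rfl
lemma An0 : An 0 = 1 := by
  have h : Aset 0 = {([] : List Bool)} := by
    ext u
    constructor
    · rintro ⟨_, hlen⟩
      exact List.length_eq_zero_iff.mp hlen
    · rintro rfl
      exact ⟨by decide, rfl⟩
  rw [An, h, Set.ncard_singleton]

lemma Bn0 : Bn 0 = 1 := by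
  have h : Bset 0 = {([] : List Bool)} := by
    ext u
    constructor
    · rintro ⟨_, hlen⟩
      exact List.length_eq_zero_iff.mp hlen
    · rintro rfl
      exact ⟨by decide, rfl⟩
  rw [Bn, h, Set.ncard_singleton]

lemma An1 : An 1 = 2 := by
  have h : Aset 1 = {[false], [true]} := by
    ext u
    constructor
    · rintro ⟨hP, hlen⟩
      obtain ⟨a, rfl⟩ := List.length_eq_one_iff.mp hlen
      cases a
      · exact Or.inl rfl
      · exact Or.inr rfl
    · rintro (rfl | rfl)
      · exact ⟨by decide, rfl⟩
      · exact ⟨by decide, rfl⟩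
  rw [An, h, Set.ncard_pair (by simp)]

lemma An2 : An 2 = 3 := by
  have h : Aset 2 = {[false, false], [false, true], [true, false]} := by
    ext u
    constructor
    · rintro ⟨hP, hlen⟩
      obtain ⟨a, b, rfl⟩ := List.length_eq_two.mp hlen
      cases a <;> cases b
      · exact Or.inl rfl
      · exact Or.inr (Or.inl rfl)
      · exact Or.inr (Or.inr rfl)
      · exact absurd hP (by decide)
    · rintro (rfl | rfl | rfl) <;> exact ⟨by decide, rfl⟩
  rw [An, h, Set.ncard_insert_of_notMem (by simp) (Set.toFinite _), Set.ncard_pair (by simp)]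

lemma B_eq_A (k : ℕ) : Bn (k + 3) = An (k + 3) + An k := by
  induction k with
  | zero =>
    have e1 : An 3 = An 2 + An 1 + Bn 0 := An_rec 0
    have e2 : Bn 1 = Bn 0 + An 0 := Bn_rec 0
    have e3 : Bn 2 = Bn 1 + An 1 := Bn_rec 1
    have e4 : Bn 3 = Bn 2 + An 2 := Bn_rec 2
    show Bn 3 = An 3 + An 0
    omega
  | succ k ih =>
    have e1 : Bn (k + 4) = Bn (k + 3) + An (k + 3) := Bn_rec (k + 3)
    have e2 : An (k + 4) = An (k + 3) + An (k + 2) + Bn (k + 1) := An_rec (k + 1)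
    have e3 : An (k + 3) = An (k + 2) + An (k + 1) + Bn k := An_rec k
    have e4 : Bn (k + 1) = Bn k + An k := Bn_rec k
    show Bn (k + 4) = An (k + 4) + An (k + 1)
    omega

lemma An_rec4 (k : ℕ) : An (k + 6) = An (k + 5) + An (k + 4) + An (k + 3) + An k := by
  have e1 : An (k + 6) = An (k + 5) + An (k + 4) + Bn (k + 3) := An_rec (k + 3)
  have e2 : Bn (k + 3) = An (k + 3) + An k := B_eq_A k
  omega

lemma f2_eq_An (n : ℕ) : f2 (n + 4) = An n := by
  have hset : {w ∈ D2 | w.length = n + 4} =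
      (fun u => u ++ [false, true, true, false]) '' Aset n := by
    ext w
    constructor
    · rintro ⟨hw, hlen⟩
      rcases hw with rfl | ⟨hpre, ⟨u, rfl⟩, honly⟩
      · simp at hlen
      · refine ⟨u, ⟨⟨hpre, ?_⟩, ?_⟩, rfl⟩
        · rintro ⟨a, b, hab⟩
          have heq : u ++ [false, true, true, false] =
              a ++ [false, true, true, false] ++ (b ++ [false]) := by
            have h2 : u ++ [false, true, true, false] =
                (u ++ [false, true, true]) ++ [false] := by simp
            rw [h2, ← hab]
            simp
          have := honly a (b ++ [false]) heq
          simp at this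
        · simp at hlen
          omega
    · rintro ⟨u, ⟨⟨hpre, hinf⟩, hlen⟩, rfl⟩
      refine ⟨Or.inr ⟨hpre, ⟨u, rfl⟩, ?_⟩, by simp [hlen]⟩
      intro a v hav
      by_contra hv
      obtain ⟨v', c, rfl⟩ := v.eq_nil_or_concat.resolve_left hv
      apply hinf
      replace hav : u ++ [false, true, true, false] =
          a ++ [false, true, true, false] ++ (v' ++ [c]) := by simpa using hav
      have h1 : u ++ [false, true, true, false] =
          (u ++ [false, true, true]) ++ [false] := by simp
      have h2 : a ++ [false, true, true, false] ++ (v' ++ [c]) =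
          (a ++ [false, true, true, false] ++ v') ++ [c] := by simp
      rw [h1, h2] at hav
      have h3 := congrArg List.dropLast hav
      rw [List.dropLast_concat, List.dropLast_concat] at h3
      exact ⟨a, v', h3.symm⟩
  rw [f2, hset, Set.ncard_image_of_injective _ (List.append_left_injective _)]
  rfl

lemma f2_small : f2 1 = 0 ∧ f2 2 = 0 ∧ f2 3 = 1 := by
  have key : ∀ n, n ≤ 3 → {w ∈ D2 | w.length = n} ⊆ {[true, true, false]} := by
    intro n hn w ⟨hw, hlen⟩
    rcases hw with rfl | ⟨_, hsuf, _⟩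
    · rfl
    · have := hsuf.length_le
      simp at this
      omega
  refine ⟨?_, ?_, ?_⟩
  · have h : {w ∈ D2 | w.length = 1} = ∅ := by
      apply Set.eq_empty_iff_forall_notMem.mpr
      intro w hw
      have h2 := key 1 (by omega) hw
      simp at h2
      rw [h2] at hw
      simp at hw
    rw [f2, h, Set.ncard_empty]
  · have h : {w ∈ D2 | w.length = 2} = ∅ := by
      apply Set.eq_empty_iff_forall_notMem.mpr
      intro w hw
      have h2 := key 2 (by omega) hw
      simp at h2
      rw [h2] at hw
      simp at hw
    rw [f2, h, Set.ncard_empty]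
  · have h : {w ∈ D2 | w.length = 3} = {[true, true, false]} := by
      apply Set.Subset.antisymm (key 3 le_rfl)
      rintro w rfl
      exact ⟨Or.inl rfl, rfl⟩
    rw [f2, h, Set.ncard_singleton]

lemma s2_zero : s2 0 = 0 := by simp [s2]

lemma s2_succ (n : ℕ) : s2 (n + 1) = s2 n + f2 (n + 1) :=
  Finset.sum_Icc_succ_top (by omega) _

lemma f2_rec (k : ℕ) :
    f2 (k + 10) = f2 (k + 9) + f2 (k + 8) + f2 (k + 7) + f2 (k + 4) := by
  have g1 : f2 (k + 10) = An (k + 6) := f2_eq_An (k + 6)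
  have g2 : f2 (k + 9) = An (k + 5) := f2_eq_An (k + 5)
  have g3 : f2 (k + 8) = An (k + 4) := f2_eq_An (k + 4)
  have g4 : f2 (k + 7) = An (k + 3) := f2_eq_An (k + 3)
  have g5 : f2 (k + 4) = An k := f2_eq_An k
  have h := An_rec4 k
  omega

lemma s2_vals : s2 0 = 0 ∧ s2 3 = 1 ∧ s2 4 = 2 ∧ s2 5 = 4 ∧ s2 6 = 7 ∧
    s2 7 = 13 ∧ s2 8 = 24 ∧ s2 9 = 45 := by
  have e0 : s2 0 = 0 := s2_zero
  have e1 : s2 1 = s2 0 + f2 1 := s2_succ 0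
  have e2 : s2 2 = s2 1 + f2 2 := s2_succ 1
  have e3 : s2 3 = s2 2 + f2 3 := s2_succ 2
  have e4 : s2 4 = s2 3 + f2 4 := s2_succ 3
  have e5 : s2 5 = s2 4 + f2 5 := s2_succ 4
  have e6 : s2 6 = s2 5 + f2 6 := s2_succ 5
  have e7 : s2 7 = s2 6 + f2 7 := s2_succ 6
  have e8 : s2 8 = s2 7 + f2 8 := s2_succ 7
  have e9 : s2 9 = s2 8 + f2 9 := s2_succ 8
  obtain ⟨hf1, hf2, hf3⟩ := f2_small
  have g4 : f2 4 = An 0 := f2_eq_An 0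
  have g5 : f2 5 = An 1 := f2_eq_An 1
  have g6 : f2 6 = An 2 := f2_eq_An 2
  have g7 : f2 7 = An 3 := f2_eq_An 3
  have g8 : f2 8 = An 4 := f2_eq_An 4
  have g9 : f2 9 = An 5 := f2_eq_An 5
  have a3 : An 3 = An 2 + An 1 + Bn 0 := An_rec 0
  have a4 : An 4 = An 3 + An 2 + Bn 1 := An_rec 1
  have a5 : An 5 = An 4 + An 3 + Bn 2 := An_rec 2
  have b1 : Bn 1 = Bn 0 + An 0 := Bn_rec 0
  have b2 : Bn 2 = Bn 1 + An 1 := Bn_rec 1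
  have n0 := An0
  have n1 := An1
  have n2 := An2
  have m0 := Bn0
  omega

lemma main_aux : ∀ m, s2 (m + 6) = s2 (m + 5) + s2 (m + 4) + s2 (m + 3) + s2 m := by
  intro m
  induction m using Nat.strong_induction_on with
  | _ m ih =>
    match m with
    | 0 =>
      obtain ⟨h0, h3, h4, h5, h6, h7, h8, h9⟩ := s2_vals
      show s2 6 = s2 5 + s2 4 + s2 3 + s2 0
      omega
    | 1 =>
      obtain ⟨h0, h3, h4, h5, h6, h7, h8, h9⟩ := s2_vals
      have e1 : s2 1 = s2 0 + f2 1 := s2_succ 0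
      obtain ⟨hf1, -, -⟩ := f2_small
      show s2 7 = s2 6 + s2 5 + s2 4 + s2 1
      omega
    | 2 =>
      obtain ⟨h0, h3, h4, h5, h6, h7, h8, h9⟩ := s2_vals
      have e1 : s2 1 = s2 0 + f2 1 := s2_succ 0
      have e2 : s2 2 = s2 1 + f2 2 := s2_succ 1
      obtain ⟨hf1, hf2, -⟩ := f2_small
      show s2 8 = s2 7 + s2 6 + s2 5 + s2 2
      omega
    | 3 =>
      obtain ⟨h0, h3, h4, h5, h6, h7, h8, h9⟩ := s2_vals
      show s2 9 = s2 8 + s2 7 + s2 6 + s2 3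
      omega
    | (k + 4) =>
      have IH : s2 (k + 9) = s2 (k + 8) + s2 (k + 7) + s2 (k + 6) + s2 (k + 3) :=
        ih (k + 3) (by omega)
      show s2 (k + 10) = s2 (k + 9) + s2 (k + 8) + s2 (k + 7) + s2 (k + 4)
      have h1 := f2_rec k
      have e1 : s2 (k + 10) = s2 (k + 9) + f2 (k + 10) := s2_succ (k + 9)
      have e2 : s2 (k + 9) = s2 (k + 8) + f2 (k + 9) := s2_succ (k + 8)
      have e3 : s2 (k + 8) = s2 (k + 7) + f2 (k + 8) := s2_succ (k + 7)
      have e4 : s2 (k + 7) = s2 (k + 6) + f2 (k + 7) := s2_succ (k + 6)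
      have e5 : s2 (k + 4) = s2 (k + 3) + f2 (k + 4) := s2_succ (k + 3)
      omega


/-- recurrence (12): for every `n ≥ 6`,
`s_n = s_{n-1} + s_{n-2} + s_{n-3} + s_{n-6}` for the code `D₂`. -/
theorem d2_cumulative_recurrence (n : ℕ) (hn : 6 ≤ n) :
    s2 n = s2 (n - 1) + s2 (n - 2) + s2 (n - 3) + s2 (n - 6) := by
  obtain ⟨m, rfl⟩ : ∃ m, n = m + 6 := ⟨n - 6, by omega⟩
  have h := main_aux m
  have e1 : m + 6 - 1 = m + 5 := by omega
  have e2 : m + 6 - 2 = m + 4 := by omega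
  have e3 : m + 6 - 3 = m + 3 := by omega
  have e4 : m + 6 - 6 = m := by omega
  rw [e1, e2, e3, e4]
  exact h
end
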